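/- arXiv:1908.08798 — 7 statements merged into one kernel-verified Lean document; each statement's English description precedes it below -/
import Mathlib

section
/- Let X = {ξ₁, …, ξₙ} be a finite subset of the unit circle 𝕊. Then L_♯^X(𝔻) = L_♯^{ξ₁}(𝔻) + ⋯ + L_♯^{ξₙ}(𝔻); that is, a function μ ∈ L^∞(𝔻) vanishes at the boundary relative to X if and only if μ can be written as a sum μ = μ₁ + ⋯ + μₙ where each μᵢ ∈ L^∞(𝔻) vanishes at the boundary relative to the single point {ξᵢ}. -/
open MeasureTheory Filter Topology ENNReal

noncomputable section

/-- The open unit disk in the complex plane. -/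
def unitDisk : Set ℂ := {z : ℂ | ‖z‖ < 1}

/-- The unit circle in the complex plane. -/
def unitCircle : Set ℂ := {z : ℂ | ‖z‖ = 1}

/-- The essential supremum of `|μ|` over a subset `s` of the plane. -/
def essBnd (μ : ℂ → ℂ) (s : Set ℂ) : ℝ≥0∞ :=
  essSup (fun z => (‖μ z‖₊ : ℝ≥0∞)) (volume.restrict s)

/-- Membership in `L^∞(𝔻)`: essentially bounded measurable function on the unit disk. -/
def MemLinf (μ : ℂ → ℂ) : Prop :=
  AEStronglyMeasurable μ (volume.restrict unitDisk) ∧ essBnd μ unitDisk ≠ ⊤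

/-- `μ` vanishes at the boundary relative to `X ⊆ 𝕊`: for every `ε > 0` there is a
compact `K ⊆ 𝔻 ∪ X` with `ess sup_{𝔻 \ K} |μ| < ε`. -/
def VanishRel (X : Set ℂ) (μ : ℂ → ℂ) : Prop :=
  ∀ ε : ℝ, 0 < ε → ∃ K : Set ℂ, IsCompact K ∧ K ⊆ unitDisk ∪ X ∧
    essBnd μ (unitDisk \ K) < ENNReal.ofReal ε

/-!
Cut the plane into the Voronoi cells of the points `ξ i`, made disjoint. A compact set
witnessing that `μ` vanishes relative to `{ξ₁, …, ξₙ}`, intersected with the closed cell of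
`ξ i`, lies in `𝔻 ∪ {ξ i}`, as the cell of `ξ i` contains no other `ξ j`; so the restriction
of `μ` to the `i`-th cell vanishes relative to `{ξ i}`. Conversely, the union of the compact
witnesses of the summands is a witness for the sum, by the triangle inequality for the
essential supremum.
-/

open Set

section Voronoi

variable {α ι : Type*}

def voronoiCell [PseudoMetricSpace α] (ξ : ι → α) (i : ι) : Set α :=
  {z | ∀ j, dist z (ξ i) ≤ dist z (ξ j)}

lemma isClosed_voronoiCell [PseudoMetricSpace α] (ξ : ι → α) (i : ι) :
    IsClosed (voronoiCell ξ i) := by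
  simp only [voronoiCell, ofPred_forall]
  exact isClosed_iInter fun j => isClosed_le (by fun_prop) (by fun_prop)

lemma iUnion_voronoiCell [PseudoMetricSpace α] [Finite ι] [Nonempty ι] (ξ : ι → α) :
    ⋃ i, voronoiCell ξ i = univ :=
  eq_univ_of_forall fun z =>
    let ⟨i, hi⟩ := Finite.exists_min fun j => dist z (ξ j)
    mem_iUnion.2 ⟨i, hi⟩

lemma range_inter_voronoiCell_subset [MetricSpace α] (ξ : ι → α) (i : ι) :
    range ξ ∩ voronoiCell ξ i ⊆ {ξ i} := by
  rintro _ ⟨⟨j, rfl⟩, hj⟩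
  simpa [dist_le_zero] using hj j

end Voronoi

lemma sum_indicator_disjointed {α ι M : Type*} [LinearOrder ι] [Fintype ι]
    [LocallyFiniteOrderBot ι] [AddCommMonoid M] {D : ι → Set α} (hD : ⋃ i, D i = univ)
    (f : α → M) (z : α) : ∑ i, (disjointed D i).indicator f z = f z := by
  rw [← Finset.indicator_biUnion_apply _ _ ((disjoint_disjointed D).set_pairwise _)]
  simp [iUnion_disjointed, hD]

lemma measurableSet_unitDisk : MeasurableSet unitDisk :=
  (isOpen_lt continuous_norm continuous_const).measurableSet

section essBnd

variable {f g : ℂ → ℂ} {s t C : Set ℂ}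

lemma essBnd_eq_eLpNorm : essBnd f s = eLpNorm f ⊤ (volume.restrict s) := by
  rw [eLpNorm_exponent_top]; rfl

lemma essBnd_zero : essBnd 0 s = 0 := by
  simp [essBnd_eq_eLpNorm]

lemma essBnd_add_le : essBnd (f + g) s ≤ essBnd f s + essBnd g s :=
  (essSup_mono_ae (Eventually.of_forall fun z => by
    show (‖f z + g z‖₊ : ℝ≥0∞) ≤ ‖f z‖₊ + ‖g z‖₊
    exact_mod_cast nnnorm_add_le (f z) (g z))).trans (ENNReal.essSup_add_le _ _)

lemma essBnd_mono_set (h : s ⊆ t) : essBnd f s ≤ essBnd f t :=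
  essSup_mono_measure' (Measure.restrict_mono h le_rfl)

lemma essBnd_indicator_le (hs : MeasurableSet s) (ht : MeasurableSet t) (h : s ∩ C ⊆ t) :
    essBnd (C.indicator f) s ≤ essBnd f t := by
  rw [essBnd_eq_eLpNorm, essBnd_eq_eLpNorm, ← eLpNorm_indicator_eq_eLpNorm_restrict hs,
    ← eLpNorm_indicator_eq_eLpNorm_restrict ht, indicator_indicator]
  exact eLpNorm_mono (norm_indicator_le_of_subset h f)

lemma MemLinf.indicator (hf : MemLinf f) (hC : MeasurableSet C) : MemLinf (C.indicator f) :=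
  ⟨hf.1.indicator hC, ne_top_of_le_ne_top hf.2
    (essBnd_indicator_le measurableSet_unitDisk measurableSet_unitDisk inter_subset_left)⟩

end essBnd

namespace VanishRel

variable {X Y : Set ℂ} {f g : ℂ → ℂ}

lemma zero : VanishRel X 0 := fun ε hε =>
  ⟨∅, isCompact_empty, empty_subset _, by simpa [essBnd_zero] using hε⟩

lemma add (hf : VanishRel X f) (hg : VanishRel Y g) : VanishRel (X ∪ Y) (f + g) := by
  intro ε hε
  obtain ⟨K, hK, hKX, hfK⟩ := hf (ε / 2) (half_pos hε)
  obtain ⟨L, hL, hLY, hgL⟩ := hg (ε / 2) (half_pos hε)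
  refine ⟨K ∪ L, hK.union hL, union_subset (hKX.trans (union_subset_union_right _
    subset_union_left)) (hLY.trans (union_subset_union_right _ subset_union_right)), ?_⟩
  calc essBnd (f + g) (unitDisk \ (K ∪ L))
      ≤ essBnd f (unitDisk \ (K ∪ L)) + essBnd g (unitDisk \ (K ∪ L)) := essBnd_add_le
    _ ≤ essBnd f (unitDisk \ K) + essBnd g (unitDisk \ L) :=
        add_le_add (essBnd_mono_set (sdiff_subset_sdiff_right subset_union_left))
          (essBnd_mono_set (sdiff_subset_sdiff_right subset_union_right))
    _ < ENNReal.ofReal (ε / 2) + ENNReal.ofReal (ε / 2) := ENNReal.add_lt_add hfK hgL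
    _ = ENNReal.ofReal ε := by
        rw [← ENNReal.ofReal_add (half_pos hε).le (half_pos hε).le, add_halves]

lemma finset_sum {ι : Type*} (s : Finset ι) {S : ι → Set ℂ} {ν : ι → ℂ → ℂ}
    (h : ∀ i ∈ s, VanishRel (S i) (ν i)) : VanishRel (⋃ i ∈ s, S i) (∑ i ∈ s, ν i) := by
  classical
  induction s using Finset.induction_on with
  | empty => simpa using (zero : VanishRel ∅ 0)
  | insert i s hi ih =>
    rw [Finset.sum_insert hi, Finset.set_biUnion_insert]
    exact (h i (Finset.mem_insert_self i s)).add
      (ih fun j hj => h j (Finset.mem_insert_of_mem hj))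

lemma indicator (hf : VanishRel X f) {C D : Set ℂ} (hD : IsClosed D) (hCD : C ⊆ D)
    (hXD : X ∩ D ⊆ Y) : VanishRel Y (C.indicator f) := by
  intro ε hε
  obtain ⟨K, hK, hKX, hfK⟩ := hf ε hε
  refine ⟨K ∩ D, hK.inter_right hD, fun z ⟨hzK, hzD⟩ => ?_, ?_⟩
  · exact (hKX hzK).imp_right fun hzX => hXD ⟨hzX, hzD⟩
  · refine lt_of_le_of_lt (essBnd_indicator_le ?_ ?_ ?_) hfK
    · exact measurableSet_unitDisk.diff (hK.isClosed.inter hD).measurableSet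
    · exact measurableSet_unitDisk.diff hK.isClosed.measurableSet
    · exact fun z ⟨⟨hz, hzKD⟩, hzC⟩ => ⟨hz, fun hzK => hzKD ⟨hzK, hCD hzC⟩⟩

end VanishRel

theorem L_sharp_finite_decomposition_general (n : ℕ) (hn : 0 < n) (ξ : Fin n → ℂ)
    (μ : ℂ → ℂ) (hμ : MemLinf μ) :
    VanishRel (Set.range ξ) μ ↔
      ∃ ν : Fin n → ℂ → ℂ, (∀ i, MemLinf (ν i) ∧ VanishRel {ξ i} (ν i)) ∧
        ∀ z, μ z = ∑ i, ν i z := by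
  constructor
  · intro hvan
    have : Nonempty (Fin n) := ⟨⟨0, hn⟩⟩
    have hcell := isClosed_voronoiCell ξ
    have hmeas : ∀ i, MeasurableSet (disjointed (voronoiCell ξ) i) := fun i =>
      disjointedRec (fun _ j ht => ht.diff (hcell j).measurableSet) (hcell i).measurableSet
    refine ⟨fun i => (disjointed (voronoiCell ξ) i).indicator μ, fun i => ⟨hμ.indicator (hmeas i),
      hvan.indicator (hcell i) (disjointed_subset _ i) (range_inter_voronoiCell_subset ξ i)⟩,
      fun z => (sum_indicator_disjointed (iUnion_voronoiCell ξ) μ z).symm⟩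
  · rintro ⟨ν, hν, hsum⟩
    have hvan := VanishRel.finset_sum Finset.univ fun i _ => (hν i).2
    simp only [Finset.mem_univ, iUnion_true, iUnion_singleton_eq_range] at hvan
    convert hvan using 1
    ext z
    simp [hsum]

/-- For a finite subset `X = {ξ₁, …, ξₙ}` of the unit circle,
`L_♯^X(𝔻) = L_♯^{ξ₁}(𝔻) + ⋯ + L_♯^{ξₙ}(𝔻)`. -/
theorem L_sharp_finite_decomposition (n : ℕ) (hn : 0 < n) (ξ : Fin n → ℂ)
    (hξ : ∀ i, ξ i ∈ unitCircle) (μ : ℂ → ℂ) (hμ : MemLinf μ) :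
    VanishRel (Set.range ξ) μ ↔
      ∃ ν : Fin n → ℂ → ℂ, (∀ i, MemLinf (ν i) ∧ VanishRel {ξ i} (ν i)) ∧
        ∀ z, μ z = ∑ i, ν i z :=
  L_sharp_finite_decomposition_general n hn ξ μ hμ
end
end

section
/- Let X = {ξ₁, …, ξₙ} be a finite subset of the unit circle 𝕊. Then B_♯^X(𝔻*) = B_♯^{ξ₁}(𝔻*) + ⋯ + B_♯^{ξₙ}(𝔻*); that is, a function φ ∈ B(𝔻*) vanishes at the boundary relative to X if and only if φ = φ₁ + ⋯ + φₙ for some φᵢ ∈ B(𝔻*) each vanishing at the boundary relative to the single point {ξᵢ}. -/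
open MeasureTheory Filter Topology ENNReal

noncomputable section

/-- The exterior of the closed unit disk, `𝔻* = {z : |z| > 1}`. -/
def extDisk : Set ℂ := {z : ℂ | 1 < ‖z‖}

/-- The weight `(|z|² − 1)²` defining the norm of `B(𝔻*)`. -/
def bweight (z : ℂ) : ℝ := (‖z‖ ^ 2 - 1) ^ 2

/-- Membership in `B(𝔻*)`: holomorphic on `𝔻*` with finite norm
`‖φ‖_B = sup (|z|²−1)² |φ(z)|`. -/
def MemB (φ : ℂ → ℂ) : Prop :=
  DifferentiableOn ℂ φ extDisk ∧
    ∃ M : ℝ, ∀ z ∈ extDisk, bweight z * ‖φ z‖ ≤ M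

/-- `φ` vanishes at the boundary relative to `X ⊆ 𝕊`: for every `ε > 0` there is a
compact `K* ⊆ 𝔻* ∪ X` with `sup_{𝔻* \ K*} (|z|²−1)² |φ(z)| < ε`. -/
def BVanishRel (X : Set ℂ) (φ : ℂ → ℂ) : Prop :=
  ∀ ε : ℝ, 0 < ε → ∃ K : Set ℂ, IsCompact K ∧ K ⊆ extDisk ∪ X ∧
    ∀ z ∈ extDisk \ K, bweight z * ‖φ z‖ < ε

/-!
If `φ` vanishes at the boundary relative to `X` and `h` is a bounded holomorphic function on `𝔻*`
tending to `0` at the points of `Y`, then `h φ` vanishes at the boundary relative to `X \ Y`: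
near `Y` the factor `h` is small, and away from `Y` the compact set for `φ` still works.
Lagrange interpolation in the variable `1/z` at the nodes `ξᵢ⁻¹` gives polynomials `hᵢ(1/z)`,
bounded on `𝔻*`, summing to `1` and vanishing at `ξⱼ` for `ξⱼ ≠ ξᵢ`; hence `φ = ∑ hᵢ φ` with
`hᵢ φ ∈ B_♯^{ξᵢ}(𝔻*)`. The converse holds because the union of finitely many compact sets is
compact.
-/

lemma bweight_nonneg (z : ℂ) : 0 ≤ bweight z := sq_nonneg _

lemma exists_pos_forall_le_of_forall_le {α : Type*} {f : α → ℝ} {s : Set α} {M : ℝ}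
    (hM : ∀ z ∈ s, f z ≤ M) : ∃ M' > 0, ∀ z ∈ s, f z ≤ M' :=
  ⟨max M 1, by positivity, fun z hz => (hM z hz).trans (le_max_left _ _)⟩

namespace BVanishRel

lemma zero (X : Set ℂ) : BVanishRel X 0 :=
  fun _ hε => ⟨∅, isCompact_empty, Set.empty_subset _, fun z _ => by simpa using hε⟩

lemma add {X Y : Set ℂ} {f g : ℂ → ℂ} (hf : BVanishRel X f) (hg : BVanishRel Y g) :
    BVanishRel (X ∪ Y) (f + g) := by
  intro ε hε
  obtain ⟨K, hKc, hKsub, hK⟩ := hf (ε / 2) (half_pos hε)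
  obtain ⟨L, hLc, hLsub, hL⟩ := hg (ε / 2) (half_pos hε)
  refine ⟨K ∪ L, hKc.union hLc, ?_, fun z ⟨hz, hzKL⟩ => ?_⟩
  · rw [Set.union_subset_iff]
    exact ⟨hKsub.trans (by gcongr; exact Set.subset_union_left),
      hLsub.trans (by gcongr; exact Set.subset_union_right)⟩
  · rw [Set.mem_union, not_or] at hzKL
    calc bweight z * ‖f z + g z‖ ≤ bweight z * ‖f z‖ + bweight z * ‖g z‖ := by
          rw [← mul_add]; exact mul_le_mul_of_nonneg_left (norm_add_le _ _) (bweight_nonneg z)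
      _ < ε / 2 + ε / 2 := add_lt_add (hK z ⟨hz, hzKL.1⟩) (hL z ⟨hz, hzKL.2⟩)
      _ = ε := add_halves ε

lemma sum {ι : Type*} (s : Finset ι) {X : ι → Set ℂ} {f : ι → ℂ → ℂ}
    (hf : ∀ i ∈ s, BVanishRel (X i) (f i)) : BVanishRel (⋃ i ∈ s, X i) (∑ i ∈ s, f i) := by
  classical
  induction s using Finset.induction_on with
  | empty => simpa using zero ∅
  | insert i s hi ih =>
    rw [Finset.sum_insert hi, Finset.set_biUnion_insert]
    exact (hf i (s.mem_insert_self i)).add (ih fun j hj => hf j (Finset.mem_insert_of_mem hj))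

lemma mul_of_tendsto_zero {X Y : Set ℂ} {φ h : ℂ → ℂ} {M C : ℝ} (hφ : BVanishRel X φ)
    (hM : ∀ z ∈ extDisk, bweight z * ‖φ z‖ ≤ M) (hC : ∀ z ∈ extDisk, ‖h z‖ ≤ C)
    (hY : ∀ ζ ∈ Y, Tendsto h (𝓝 ζ) (𝓝 0)) : BVanishRel (X \ Y) (fun z => h z * φ z) := by
  intro ε hε
  obtain ⟨M, hM0, hM⟩ := exists_pos_forall_le_of_forall_le hM
  obtain ⟨C, hC0, hC⟩ := exists_pos_forall_le_of_forall_le hC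
  obtain ⟨K, hKc, hKsub, hK⟩ := hφ (ε / C) (by positivity)
  have hsmall : ∀ᶠ z in 𝓝ˢ Y, ‖h z‖ < ε / M := eventually_nhdsSet_iff_forall.mpr fun ζ hζ =>
    (hY ζ hζ).norm.eventually (eventually_lt_nhds (by simpa using div_pos hε hM0))
  obtain ⟨U, hUo, hYU, hU⟩ := mem_nhdsSet_iff_exists.mp hsmall
  refine ⟨K \ U, hKc.diff hUo, ?_, fun z ⟨hz, hzKU⟩ => ?_⟩
  · rintro z ⟨hzK, hzU⟩
    rcases hKsub hzK with hz | hz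
    · exact Or.inl hz
    · exact Or.inr ⟨hz, fun hzY => hzU (hYU hzY)⟩
  have hφz : 0 ≤ bweight z * ‖φ z‖ := mul_nonneg (bweight_nonneg z) (norm_nonneg _)
  rw [norm_mul, mul_left_comm]
  by_cases hzK : z ∈ K
  · have hzU : z ∈ U := by_contra fun hzU => hzKU ⟨hzK, hzU⟩
    calc ‖h z‖ * (bweight z * ‖φ z‖) ≤ ‖h z‖ * M := by gcongr; exact hM z hz
      _ < ε / M * M := by gcongr; exact hU hzU
      _ = ε := div_mul_cancel₀ ε hM0.ne'
  · calc ‖h z‖ * (bweight z * ‖φ z‖) ≤ C * (bweight z * ‖φ z‖) := by gcongr; exact hC z hz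
      _ < C * (ε / C) := by gcongr; exact hK z ⟨hz, hzK⟩
      _ = ε := mul_div_cancel₀ ε hC0.ne'

end BVanishRel

lemma MemB.mul {φ h : ℂ → ℂ} {C : ℝ} (hφ : MemB φ) (hh : DifferentiableOn ℂ h extDisk)
    (hC : ∀ z ∈ extDisk, ‖h z‖ ≤ C) : MemB (fun z => h z * φ z) := by
  obtain ⟨M, hM⟩ := hφ.2
  refine ⟨hh.mul hφ.1, C * M, fun z hz => ?_⟩
  rw [norm_mul, mul_left_comm]
  exact mul_le_mul (hC z hz) (hM z hz) (mul_nonneg (bweight_nonneg z) (norm_nonneg _))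
    ((norm_nonneg _).trans (hC z hz))

/-- The Lagrange basis polynomial of a node is shared equally among the indices carrying
that node. -/
lemma exists_polynomial_sum_eq_one_eval_eq_zero {F ι : Type*} [Field F] [CharZero F]
    [Fintype ι] [Nonempty ι] (v : ι → F) :
    ∃ p : ι → Polynomial F, ∑ i, p i = 1 ∧ ∀ i j, v j ≠ v i → (p i).eval (v j) = 0 := by
  classical
  set T := Finset.univ.image v
  let m : F → ℕ := fun a => (Finset.univ.filter (v · = a)).card
  have hm : ∀ a ∈ T, (m a : F) ≠ 0 := fun a ha => by
    obtain ⟨i, -, rfl⟩ := Finset.mem_image.mp ha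
    exact Nat.cast_ne_zero.mpr (Finset.card_ne_zero.mpr ⟨i, by simp⟩)
  refine ⟨fun i => (m (v i) : F)⁻¹ • Lagrange.basis T id (v i), ?_, fun i j hij => ?_⟩
  · rw [Finset.sum_comp (fun a => (m a : F)⁻¹ • Lagrange.basis T id a) v,
      ← Lagrange.sum_basis (Set.injOn_id _) (Finset.univ_nonempty.image v)]
    refine Finset.sum_congr rfl fun a ha => ?_
    rw [← Nat.cast_smul_eq_nsmul F, smul_smul, mul_inv_cancel₀ (hm a ha), one_smul]
  · have hj : v j ∈ T := Finset.mem_image_of_mem v (Finset.mem_univ j)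
    rw [Polynomial.eval_smul, smul_eq_mul, ← id_eq (v j),
      Lagrange.eval_basis_of_ne hij.symm hj, mul_zero]

namespace Polynomial

lemma differentiableOn_eval_inv (p : Polynomial ℂ) :
    DifferentiableOn ℂ (fun z => p.eval z⁻¹) extDisk :=
  p.differentiable.comp_differentiableOn <| differentiableOn_inv.mono fun z (hz : 1 < ‖z‖) =>
    norm_pos_iff.mp (one_pos.trans hz)

lemma exists_bound_eval_inv (p : Polynomial ℂ) : ∃ C, ∀ z ∈ extDisk, ‖p.eval z⁻¹‖ ≤ C := by
  obtain ⟨C, hC⟩ := (isCompact_closedBall (0 : ℂ) 1).exists_bound_of_continuousOn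
    p.continuous.continuousOn
  refine ⟨C, fun z (hz : 1 < ‖z‖) => hC _ ?_⟩
  rw [mem_closedBall_zero_iff, norm_inv]
  exact inv_le_one_of_one_le₀ hz.le

lemma tendsto_eval_inv_nhds {p : Polynomial ℂ} {ζ : ℂ} (hζ : ζ ≠ 0) :
    Tendsto (fun z => p.eval z⁻¹) (𝓝 ζ) (𝓝 (p.eval ζ⁻¹)) :=
  (p.continuous.continuousAt.comp (continuousAt_inv₀ hζ)).tendsto

end Polynomial

lemma exists_partition_of_unity_extDisk {ι : Type*} [Fintype ι] [Nonempty ι] {ξ : ι → ℂ}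
    (hξ : ∀ i, ξ i ≠ 0) :
    ∃ h : ι → ℂ → ℂ, (∀ z, ∑ i, h i z = 1) ∧ ∀ i, DifferentiableOn ℂ (h i) extDisk ∧
      (∃ C, ∀ z ∈ extDisk, ‖h i z‖ ≤ C) ∧ ∀ j, ξ j ≠ ξ i → Tendsto (h i) (𝓝 (ξ j)) (𝓝 0) := by
  obtain ⟨p, hsum, hzero⟩ := exists_polynomial_sum_eq_one_eval_eq_zero fun i => (ξ i)⁻¹
  refine ⟨fun i z => (p i).eval z⁻¹, fun z => ?_, fun i => ⟨(p i).differentiableOn_eval_inv,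
    (p i).exists_bound_eval_inv, fun j hij => ?_⟩⟩
  · rw [← Polynomial.eval_finsetSum, hsum, Polynomial.eval_one]
  · simpa [hzero i j (inv_injective.ne hij)] using
      Polynomial.tendsto_eval_inv_nhds (p := p i) (hξ j)

/-- For a finite subset `X = {ξ₁, …, ξₙ}` of the unit circle,
`B_♯^X(𝔻*) = B_♯^{ξ₁}(𝔻*) + ⋯ + B_♯^{ξₙ}(𝔻*)`. -/
theorem B_sharp_finite_decomposition (n : ℕ) (hn : 0 < n) (ξ : Fin n → ℂ)
    (hξ : ∀ i, ξ i ∈ unitCircle) (φ : ℂ → ℂ) (hφ : MemB φ) :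
    BVanishRel (Set.range ξ) φ ↔
      ∃ ψ : Fin n → ℂ → ℂ, (∀ i, MemB (ψ i) ∧ BVanishRel {ξ i} (ψ i)) ∧
        ∀ z, φ z = ∑ i, ψ i z := by
  constructor
  · intro hvan
    have : Nonempty (Fin n) := ⟨⟨0, hn⟩⟩
    have hξ0 : ∀ i, ξ i ≠ 0 := fun i h0 => by simpa [unitCircle, h0] using hξ i
    obtain ⟨h, hsum, hh⟩ := exists_partition_of_unity_extDisk hξ0
    obtain ⟨M, hM⟩ := hφ.2
    refine ⟨fun i z => h i z * φ z, fun i => ?_, fun z => by rw [← Finset.sum_mul, hsum, one_mul]⟩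
    obtain ⟨hdiff, ⟨C, hC⟩, hzero⟩ := hh i
    have hvan_i := hvan.mul_of_tendsto_zero hM hC (Y := Set.range ξ \ {ξ i}) <| by
      rintro _ ⟨⟨j, rfl⟩, hj⟩
      exact hzero j hj
    rw [Set.sdiff_sdiff_cancel_left (by simp)] at hvan_i
    exact ⟨hφ.mul hdiff hC, hvan_i⟩
  · rintro ⟨ψ, hψ, hsum⟩
    have hφψ : φ = ∑ i, ψ i := funext fun z => by rw [hsum, Finset.sum_apply]
    simpa [hφψ] using BVanishRel.sum Finset.univ fun i _ => (hψ i).2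
end
end

section
/- If X and X' are subsets of the unit circle 𝕊 with X ⊊ X' (X strictly contained in X'), then the inclusion B_♯^X(𝔻*) ⊆ B_♯^{X'}(𝔻*) is strict; that is, there exists φ ∈ B_♯^{X'}(𝔻*) with φ ∉ B_♯^X(𝔻*). -/
open MeasureTheory Filter Topology ENNReal

noncomputable section

/-!
Pick `a ∈ X' \ X` and let `φ(z) = 1 / ((z - a)² z³)`. Since `|z - a| ≥ |z| - 1`, the weighted
modulus `(|z|² - 1)² |φ(z)|` is at most `4 ((|z| - 1) / |z - a|)² / |z|`: it is small near infinity
and near every boundary point other than `a`, so `φ` vanishes relative to `{a} ⊆ X'`. Along the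
radius `t ↦ t a` it equals `(t + 1)² / t³ → 4` as `t → 1⁺`, whereas vanishing relative to `X ∌ a`
forces the weighted modulus to tend to `0` at `a`.
-/

def poleAt (a : ℂ) (z : ℂ) : ℂ := ((z - a) ^ 2 * z ^ 3)⁻¹

theorem BVanishRel.mono {X Y : Set ℂ} {φ : ℂ → ℂ} (hXY : X ⊆ Y) (h : BVanishRel X φ) :
    BVanishRel Y φ := fun ε hε =>
  let ⟨K, hK, hKX, hlt⟩ := h ε hε
  ⟨K, hK, hKX.trans (Set.union_subset_union_right _ hXY), hlt⟩

theorem BVanishRel.tendsto_zero {X : Set ℂ} {φ : ℂ → ℂ} (h : BVanishRel X φ) {a : ℂ}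
    (ha : a ∉ extDisk ∪ X) :
    Tendsto (fun z => bweight z * ‖φ z‖) (𝓝[extDisk] a) (𝓝 0) := by
  rw [Metric.tendsto_nhds]
  intro ε hε
  obtain ⟨K, hK, hKX, hlt⟩ := h ε hε
  have haK : Kᶜ ∈ 𝓝 a := hK.isClosed.isOpen_compl.mem_nhds fun h => ha (hKX h)
  filter_upwards [self_mem_nhdsWithin, mem_nhdsWithin_of_mem_nhds haK] with z hz hzK
  rw [Real.dist_0_eq_abs, abs_of_nonneg (by unfold bweight; positivity)]
  exact hlt z ⟨hz, hzK⟩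

theorem ne_zero_of_mem_extDisk {z : ℂ} (hz : z ∈ extDisk) : z ≠ 0 := by
  rintro rfl
  simp [extDisk] at hz
  linarith

theorem norm_sub_pos_of_mem_extDisk {a z : ℂ} (ha : ‖a‖ ≤ 1) (hz : z ∈ extDisk) :
    0 < ‖z - a‖ :=
  lt_of_lt_of_le (by linarith [show 1 < ‖z‖ from hz]) (norm_sub_norm_le z a)

theorem differentiableOn_poleAt {a : ℂ} (ha : ‖a‖ ≤ 1) :
    DifferentiableOn ℂ (poleAt a) extDisk := fun z hz =>
  have hza : z - a ≠ 0 := norm_pos_iff.1 (norm_sub_pos_of_mem_extDisk ha hz)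
  (((differentiableAt_id.sub_const a).pow 2).mul (differentiableAt_id.pow 3)).inv
    (mul_ne_zero (pow_ne_zero 2 hza) (pow_ne_zero 3 (ne_zero_of_mem_extDisk hz)))
    |>.differentiableWithinAt

theorem bweight_mul_norm_poleAt (a z : ℂ) :
    bweight z * ‖poleAt a z‖ = (‖z‖ ^ 2 - 1) ^ 2 / (‖z - a‖ ^ 2 * ‖z‖ ^ 3) := by
  simp only [bweight, poleAt, norm_inv, norm_mul, norm_pow, div_eq_mul_inv]

theorem bweight_mul_norm_poleAt_le {a z : ℂ} (ha : ‖a‖ ≤ 1) (hz : z ∈ extDisk) :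
    bweight z * ‖poleAt a z‖ ≤ 4 * ((‖z‖ - 1) / ‖z - a‖) ^ 2 / ‖z‖ := by
  have hr : 1 < ‖z‖ := hz
  have hd : 0 < ‖z - a‖ := norm_sub_pos_of_mem_extDisk ha hz
  have hsq : (‖z‖ + 1) ^ 2 ≤ 4 * ‖z‖ ^ 2 := by nlinarith
  calc bweight z * ‖poleAt a z‖
      = ((‖z‖ - 1) / ‖z - a‖) ^ 2 * (‖z‖ + 1) ^ 2 / ‖z‖ ^ 3 := by
        rw [bweight_mul_norm_poleAt]
        field_simp
        ring
    _ ≤ ((‖z‖ - 1) / ‖z - a‖) ^ 2 * (4 * ‖z‖ ^ 2) / ‖z‖ ^ 3 := by gcongr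
    _ = 4 * ((‖z‖ - 1) / ‖z - a‖) ^ 2 / ‖z‖ := by
        field_simp

theorem bweight_mul_norm_poleAt_le_four_div {a z : ℂ} (ha : ‖a‖ ≤ 1) (hz : z ∈ extDisk) :
    bweight z * ‖poleAt a z‖ ≤ 4 / ‖z‖ := by
  have hr : 1 < ‖z‖ := hz
  have hratio : (‖z‖ - 1) / ‖z - a‖ ≤ 1 := by
    rw [div_le_one (norm_sub_pos_of_mem_extDisk ha hz)]
    linarith [norm_sub_norm_le z a]
  have h0 : 0 ≤ (‖z‖ - 1) / ‖z - a‖ := div_nonneg (by linarith) (norm_nonneg _)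
  refine (bweight_mul_norm_poleAt_le ha hz).trans ?_
  gcongr
  nlinarith

theorem memB_poleAt {a : ℂ} (ha : ‖a‖ ≤ 1) : MemB (poleAt a) := by
  refine ⟨differentiableOn_poleAt ha, 4, fun z hz => ?_⟩
  calc bweight z * ‖poleAt a z‖ ≤ 4 / ‖z‖ := bweight_mul_norm_poleAt_le_four_div ha hz
    _ ≤ 4 := div_le_self (by norm_num) (le_of_lt hz)

theorem bVanishRel_poleAt {a : ℂ} (ha : ‖a‖ ≤ 1) : BVanishRel {a} (poleAt a) := by
  intro ε hε
  set c := √ε / 2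
  have hc : 0 < c := by positivity
  have hc2 : 4 * c ^ 2 = ε := by rw [div_pow, Real.sq_sqrt hε.le]; ring
  -- A truncated Stolz angle at `a`: outside it, either `|z| > 4 / ε` or `(|z| - 1) / |z - a| < c`.
  refine ⟨{z | 1 ≤ ‖z‖ ∧ ‖z‖ ≤ 4 / ε ∧ c * ‖z - a‖ ≤ ‖z‖ - 1}, ?_, ?_, ?_⟩
  · refine (isCompact_closedBall (0 : ℂ) (4 / ε)).of_isClosed_subset ?_
      fun z hz => by simpa using hz.2.1
    refine (isClosed_le continuous_const continuous_norm).inter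
      ((isClosed_le continuous_norm continuous_const).inter ?_)
    exact isClosed_le (continuous_const.mul (continuous_id.sub continuous_const).norm)
      (continuous_norm.sub continuous_const)
  · rintro z ⟨h1, -, hcz⟩
    rcases h1.lt_or_eq with h | h
    · exact Or.inl h
    · rw [← h, sub_self] at hcz
      exact Or.inr (sub_eq_zero.1 (norm_le_zero_iff.1 (nonpos_of_mul_nonpos_right hcz hc)))
  · rintro z ⟨hz, hzK⟩
    have hr : 1 < ‖z‖ := hz
    simp only [Set.mem_ofPred_eq, not_and_or, not_le] at hzK
    rcases hzK with h | h | h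
    · exact absurd hr.le (not_le.2 h)
    · calc bweight z * ‖poleAt a z‖ ≤ 4 / ‖z‖ := bweight_mul_norm_poleAt_le_four_div ha hz
        _ < ε := by rwa [div_lt_comm₀ (by linarith) hε]
    · have hd := norm_sub_pos_of_mem_extDisk ha hz
      have hratio : (‖z‖ - 1) / ‖z - a‖ < c := (div_lt_iff₀ hd).2 (by linarith)
      have h0 : 0 ≤ (‖z‖ - 1) / ‖z - a‖ := div_nonneg (by linarith) hd.le
      calc bweight z * ‖poleAt a z‖ ≤ 4 * ((‖z‖ - 1) / ‖z - a‖) ^ 2 / ‖z‖ :=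
            bweight_mul_norm_poleAt_le ha hz
        _ ≤ 4 * ((‖z‖ - 1) / ‖z - a‖) ^ 2 := div_le_self (by positivity) hr.le
        _ < 4 * c ^ 2 := by gcongr
        _ = ε := hc2

theorem norm_ofReal_mul_of_norm_eq_one {a : ℂ} (ha : ‖a‖ = 1) {t : ℝ} (ht : 0 ≤ t) :
    ‖(t : ℂ) * a‖ = t := by
  rw [norm_mul, ha, mul_one, Complex.norm_real, Real.norm_of_nonneg ht]

theorem bweight_mul_norm_poleAt_ofReal_mul {a : ℂ} (ha : ‖a‖ = 1) {t : ℝ} (ht : 1 < t) :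
    bweight (t * a) * ‖poleAt a (t * a)‖ = (t + 1) ^ 2 / t ^ 3 := by
  have hsub : (t : ℂ) * a - a = ((t - 1 : ℝ) : ℂ) * a := by push_cast; ring
  have ht1 : t - 1 ≠ 0 := by linarith
  rw [bweight_mul_norm_poleAt, hsub, norm_ofReal_mul_of_norm_eq_one ha (by linarith),
    norm_ofReal_mul_of_norm_eq_one ha (by linarith)]
  field_simp
  ring

theorem tendsto_ofReal_mul_nhdsGT_one {a : ℂ} (ha : ‖a‖ = 1) :
    Tendsto (fun t : ℝ => (t : ℂ) * a) (𝓝[>] 1) (𝓝[extDisk] a) := by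
  refine tendsto_nhdsWithin_iff.2 ⟨?_, ?_⟩
  · have hcont : Continuous fun t : ℝ => (t : ℂ) * a := by fun_prop
    simpa using (hcont.tendsto 1).mono_left nhdsWithin_le_nhds
  · filter_upwards [self_mem_nhdsWithin] with t (ht : 1 < t)
    show 1 < ‖(t : ℂ) * a‖
    rwa [norm_ofReal_mul_of_norm_eq_one ha (by linarith)]

theorem not_bVanishRel_poleAt {X : Set ℂ} {a : ℂ} (ha : ‖a‖ = 1) (haX : a ∉ X) :
    ¬ BVanishRel X (poleAt a) := by
  intro h
  have ha' : a ∉ extDisk ∪ X := by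
    rintro (h | h)
    · exact (lt_irrefl 1) (ha.symm.trans_gt h)
    · exact haX h
  have hzero := (h.tendsto_zero ha').comp (tendsto_ofReal_mul_nhdsGT_one ha)
  have hfour : Tendsto (fun t : ℝ => (t + 1) ^ 2 / t ^ 3) (𝓝[>] 1) (𝓝 ((1 + 1) ^ 2 / 1 ^ 3)) :=
    (ContinuousAt.div (by fun_prop) (by fun_prop) (by norm_num)).tendsto.mono_left
      nhdsWithin_le_nhds
  have hfour' := hfour.congr' (eventually_nhdsWithin_of_forall fun t ht =>
    (bweight_mul_norm_poleAt_ofReal_mul ha (Set.mem_Ioi.1 ht)).symm)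
  exact absurd (tendsto_nhds_unique hfour' hzero) (by norm_num)

/-- If `X ⊊ X' ⊆ 𝕊`, then the inclusion `B_♯^X(𝔻*) ⊆ B_♯^{X'}(𝔻*)`
is strict. -/
theorem B_sharp_strict_inclusion (X X' : Set ℂ) (hX' : X' ⊆ unitCircle)
    (hss : X ⊂ X') :
    ∃ φ : ℂ → ℂ, MemB φ ∧ BVanishRel X' φ ∧ ¬ BVanishRel X φ := by
  obtain ⟨a, haX', haX⟩ := Set.exists_of_ssubset hss
  have ha : ‖a‖ = 1 := hX' haX'
  exact ⟨poleAt a, memB_poleAt ha.le,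
    (bVanishRel_poleAt ha.le).mono (Set.singleton_subset_iff.2 haX'),
    not_bVanishRel_poleAt ha haX⟩
end
end

section
/- Let X ⊆ 𝕊, let g be a Möbius transformation mapping 𝔻* bijectively onto itself, and let φ be holomorphic on 𝔻* with ‖φ‖_B < ∞ and satisfying the invariance φ(g(z)) g'(z)² = φ(z) for all z ∈ 𝔻*. Suppose there are a point z₀ ∈ 𝔻* with φ(z₀) ≠ 0 and a point ξ ∈ 𝕊 with ξ ∉ X such that the orbit gⁿ(z₀) converges to ξ as n → ∞. Then φ does not vanish at the boundary relative to X, i.e., φ ∉ B_♯^X(𝔻*). -/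
/-!
Bijectivity of `g` on `𝔻*` forces `g` to preserve the unit circle, so its matrix `M` satisfies
`Mᴴ J M = α J` with `J = diag(1, -1)` and `α > 0`. Consequently `(|z|² − 1)² |φ(z)|` is constant
along `g`-orbits in `𝔻*`, and `g` commutes with the reflection `z ↦ 1 / z̄`.

If the orbit of `z₀` avoids the pole of `g`, it stays in `𝔻*`, keeps the positive weighted modulus
of `z₀` and tends to `ξ ∉ X`, so no compact `K* ⊆ 𝔻* ∪ X` can contain all points where this modulus
is large. If the orbit hits the pole `p`, the convention `x / 0 = 0` sends it to `0` and then along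
the `g`-orbit of `0` in `𝔻`; its reflection is the genuine orbit of `g(∞) = a / c` in `𝔻*`, which
also tends to `ξ` and, by continuity at `p`, carries the same weighted modulus as `p`.
-/

open MeasureTheory Filter Topology ENNReal

noncomputable section

/-- The Möbius transformation `z ↦ (az + b)/(cz + d)`. -/
def mobius (a b c d : ℂ) : ℂ → ℂ := fun z => (a * z + b) / (c * z + d)

open Complex ComplexConjugate

lemma div_eq_div_of_mul_eq_mul {K : Type*} [Field K] {n₁ d₁ n₂ d₂ : K}
    (h : n₁ * d₂ = d₁ * n₂) (h₁ : n₁ ≠ 0 ∨ d₁ ≠ 0) (h₂ : n₂ ≠ 0 ∨ d₂ ≠ 0) :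
    n₁ / d₁ = n₂ / d₂ := by
  by_cases hd₁ : d₁ = 0 <;> by_cases hd₂ : d₂ = 0
  · simp [hd₁, hd₂]
  · simp_all
  · simp_all
  · rw [div_eq_div_iff hd₁ hd₂, h, mul_comm]

lemma iterate_mem_and_apply_eq {α β : Type*} {f : α → α} {s : Set α} {P : α → Prop} {W : α → β}
    (hf : ∀ z ∈ s, P z → f z ∈ s ∧ W (f z) = W z) {x : α} (hx : x ∈ s) {n : ℕ}
    (hn : ∀ k < n, P (f^[k] x)) : f^[n] x ∈ s ∧ W (f^[n] x) = W x := by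
  induction n with
  | zero => exact ⟨hx, rfl⟩
  | succ n ih =>
    obtain ⟨hmem, heq⟩ := ih fun k hk => hn k (hk.trans n.lt_succ_self)
    rw [Function.iterate_succ_apply']
    obtain ⟨hmem', heq'⟩ := hf _ hmem (hn n n.lt_succ_self)
    exact ⟨hmem', heq'.trans heq⟩

lemma Function.IsPeriodicPt.eq_of_tendsto_iterate {α : Type*} [TopologicalSpace α] [T2Space α]
    {f : α → α} {n : ℕ} {x y : α} (hx : IsPeriodicPt f n x) (hn : 0 < n)
    (h : Tendsto (fun k => f^[k] x) atTop (𝓝 y)) : x = y := by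
  have hsub : Tendsto (fun k => f^[n * k] x) atTop (𝓝 y) :=
    h.comp (tendsto_id.const_mul_atTop' hn)
  exact tendsto_nhds_unique (tendsto_const_nhds.congr fun k => (hx.mul_const k).eq.symm) hsub

lemma tendsto_iterate_of_iterate_eq {α : Type*} {f : α → α} {x y : α} {n : ℕ}
    {l : Filter α} (h : Tendsto (fun k => f^[k] x) atTop l) (hy : f^[n] x = y) :
    Tendsto (fun k => f^[k] y) atTop l := by
  refine (h.comp (tendsto_add_atTop_nat n)).congr fun k => ?_
  rw [Function.comp_apply, Function.iterate_add_apply, hy]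

lemma isOpen_extDisk : IsOpen extDisk :=
  isOpen_lt continuous_const continuous_norm

lemma mem_extDisk_iff {z : ℂ} : z ∈ extDisk ↔ 1 < normSq z := by
  rw [← Complex.sq_norm, one_lt_sq_iff₀ (norm_nonneg z)]
  rfl

lemma mem_unitDisk_iff {z : ℂ} : z ∈ unitDisk ↔ normSq z < 1 := by
  rw [← Complex.sq_norm, sq_lt_one_iff₀ (norm_nonneg z)]
  rfl

lemma bweight_eq (z : ℂ) : bweight z = (normSq z - 1) ^ 2 := by
  rw [bweight, Complex.sq_norm]

lemma unitCircle_subset_closure_unitDisk : unitCircle ⊆ closure unitDisk := by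
  have : unitDisk = Metric.ball 0 1 := by ext; simp [unitDisk]
  rw [this, closure_ball 0 one_ne_zero]
  intro z hz
  simp [unitCircle] at hz
  simp [hz]

lemma unitCircle_subset_closure_extDisk : unitCircle ⊆ closure extDisk := by
  have : extDisk = (Metric.closedBall 0 1)ᶜ := by ext; simp [extDisk]
  rw [this, closure_compl, interior_closedBall 0 one_ne_zero]
  intro z hz
  simp [unitCircle] at hz
  simp [hz]

lemma normSq_add_sub_normSq_add (a b c d z : ℂ) :
    normSq (a * z + b) - normSq (c * z + d) =
      (normSq a - normSq c) * normSq z + (normSq b - normSq d) +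
        2 * ((a * conj b - c * conj d) * z).re := by
  simp only [normSq_apply, mul_re, mul_im, add_re, add_im, sub_re, sub_im, conj_re, conj_im]
  ring

lemma normSq_mul_sub_mul (a b c d : ℂ) :
    normSq (a * d - b * c) =
      (normSq a - normSq c) * (normSq d - normSq b) + normSq (a * conj b - c * conj d) := by
  simp only [normSq_apply, mul_re, mul_im, sub_re, sub_im, conj_re, conj_im]
  ring

lemma mobius_eq_zero_of_denom_eq_zero {a b c d z : ℂ} (hz : c * z + d = 0) :
    mobius a b c d z = 0 := by
  simp [mobius, hz]

lemma eq_of_mobius_eq {a b c d : ℂ} (hdet : a * d - b * c ≠ 0) {w z : ℂ} (hw : c * w + d ≠ 0)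
    (hz : c * z + d ≠ 0) (h : mobius a b c d w = mobius a b c d z) : w = z := by
  rw [mobius, mobius, div_eq_div_iff hw hz] at h
  have : (a * d - b * c) * (w - z) = 0 := by linear_combination h
  exact sub_eq_zero.mp ((mul_eq_zero.mp this).resolve_left hdet)

lemma one_lt_normSq_mobius_iff {a b c d z : ℂ} (hz : c * z + d ≠ 0) :
    1 < normSq (mobius a b c d z) ↔ normSq (c * z + d) < normSq (a * z + b) := by
  rw [mobius, normSq_div, one_lt_div (normSq_pos.mpr hz)]

lemma deriv_mobius {a b c d z : ℂ} (hz : c * z + d ≠ 0) :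
    deriv (mobius a b c d) z = (a * d - b * c) / (c * z + d) ^ 2 := by
  have hnum : HasDerivAt (fun w => a * w + b) a z := by
    simpa using ((hasDerivAt_id z).const_mul a).add_const b
  have hden : HasDerivAt (fun w => c * w + d) c z := by
    simpa using ((hasDerivAt_id z).const_mul c).add_const d
  rw [show mobius a b c d = (fun w => a * w + b) / (fun w => c * w + d) from rfl,
    (hnum.div hden hz).deriv]
  ring

lemma mul_mobius_add {a b c d c' d' z : ℂ} (hz : c * z + d ≠ 0) :
    c' * mobius a b c d z + d' = ((c' * a + d' * c) * z + (c' * b + d' * d)) / (c * z + d) := by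
  rw [mobius, mul_div_assoc', div_add' _ _ _ hz]
  ring

lemma mobius_mobius {a b c d a' b' c' d' z : ℂ} (hz : c' * z + d' ≠ 0) :
    mobius a b c d (mobius a' b' c' d' z) =
      mobius (a * a' + b * c') (a * b' + b * d') (c * a' + d * c') (c * b' + d * d') z := by
  simp only [mobius]
  rw [mul_div_assoc', mul_div_assoc', div_add' _ _ _ hz, div_add' _ _ _ hz,
    div_div_div_cancel_right₀ hz]
  congr 1 <;> ring

/-- `M = !![a, b; c, d]` satisfies `Mᴴ J M = α J` for `J = diag(1, -1)`, i.e. `M / √α ∈ U(1,1)`. -/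
structure IsScaledU11 (a b c d : ℂ) (α : ℝ) : Prop where
  pos : 0 < α
  normSq_sub_normSq_left : normSq a - normSq c = α
  normSq_sub_normSq_right : normSq d - normSq b = α
  mul_conj_eq : a * conj b = c * conj d

namespace IsScaledU11

variable {a b c d : ℂ} {α : ℝ} (h : IsScaledU11 a b c d α)
include h

lemma normSq_sub (z : ℂ) :
    normSq (a * z + b) - normSq (c * z + d) = α * (normSq z - 1) := by
  rw [normSq_add_sub_normSq_add, h.mul_conj_eq, sub_self, zero_mul, zero_re]
  linear_combination normSq z * h.normSq_sub_normSq_left - h.normSq_sub_normSq_right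

lemma normSq_det : normSq (a * d - b * c) = α ^ 2 := by
  rw [normSq_mul_sub_mul, h.normSq_sub_normSq_left, h.normSq_sub_normSq_right, h.mul_conj_eq,
    sub_self, map_zero]
  ring

lemma a_ne_zero : a ≠ 0 := by
  rw [← normSq_pos]
  linarith [h.pos, h.normSq_sub_normSq_left, normSq_nonneg c]

lemma d_ne_zero : d ≠ 0 := by
  rw [← normSq_pos]
  linarith [h.pos, h.normSq_sub_normSq_right, normSq_nonneg b]

lemma normSq_mobius_sub_one {z : ℂ} (hz : c * z + d ≠ 0) :
    normSq (mobius a b c d z) - 1 = α * (normSq z - 1) / normSq (c * z + d) := by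
  rw [mobius, normSq_div, div_sub_one (normSq_pos.mpr hz).ne', h.normSq_sub]

lemma mobius_mem_unitDisk {z : ℂ} (hz : z ∈ unitDisk) : mobius a b c d z ∈ unitDisk := by
  by_cases hzp : c * z + d = 0
  · simp [mobius, hzp, unitDisk]
  rw [mem_unitDisk_iff] at hz ⊢
  have : α * (normSq z - 1) / normSq (c * z + d) < 0 :=
    div_neg_of_neg_of_pos (mul_neg_of_pos_of_neg h.pos (by linarith)) (normSq_pos.mpr hzp)
  linarith [h.normSq_mobius_sub_one hzp]

lemma div_mem_extDisk (hc : c ≠ 0) : a / c ∈ extDisk := by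
  rw [mem_extDisk_iff, normSq_div, one_lt_div (normSq_pos.mpr hc)]
  linarith [h.pos, h.normSq_sub_normSq_left]

lemma bweight_mobius {z : ℂ} (hz : c * z + d ≠ 0) :
    bweight (mobius a b c d z) = bweight z * ‖deriv (mobius a b c d) z‖ ^ 2 := by
  have hdet : ‖a * d - b * c‖ ^ 2 = α ^ 2 := by rw [Complex.sq_norm, h.normSq_det]
  rw [bweight_eq, bweight_eq, h.normSq_mobius_sub_one hz, deriv_mobius hz, norm_div, norm_pow,
    Complex.sq_norm, div_pow ‖a * d - b * c‖, hdet]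
  have := (normSq_pos.mpr hz).ne'
  field_simp

lemma bweight_mul_norm_mobius {φ : ℂ → ℂ} {z : ℂ} (hz : c * z + d ≠ 0)
    (hφ : φ (mobius a b c d z) * deriv (mobius a b c d) z ^ 2 = φ z) :
    bweight (mobius a b c d z) * ‖φ (mobius a b c d z)‖ = bweight z * ‖φ z‖ := by
  rw [h.bweight_mobius hz, ← hφ, norm_mul, norm_pow]
  ring

lemma mobius_inv_conj (hdet : a * d - b * c ≠ 0) {z : ℂ} (hz : z ≠ 0) :
    mobius a b c d (conj z)⁻¹ = (conj (mobius a b c d z))⁻¹ := by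
  have hz' : conj z ≠ 0 := (map_ne_zero _).mpr hz
  have hconj : conj a * conj d - conj b * conj c ≠ 0 := by
    simpa only [map_sub, map_mul] using (map_ne_zero conj).mpr hdet
  have ha : (a * conj a : ℂ) - c * conj c = α := by
    simp only [mul_conj]; exact_mod_cast h.normSq_sub_normSq_left
  have hd : (d * conj d : ℂ) - b * conj b = α := by
    simp only [mul_conj]; exact_mod_cast h.normSq_sub_normSq_right
  have hac : conj a * b = conj c * d := by simpa using congrArg conj h.mul_conj_eq
  calc mobius a b c d (conj z)⁻¹ = (a + b * conj z) / (c + d * conj z) := by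
        rw [mobius, ← mul_div_mul_right _ _ hz']
        congr 1 <;> field_simp
    _ = (conj c * conj z + conj d) / (conj a * conj z + conj b) := by
        refine div_eq_div_of_mul_eq_mul ?_ ?_ ?_
        · linear_combination (conj z) * ha - (conj z) * hd + h.mul_conj_eq + conj z ^ 2 * hac
        · by_contra! h0
          exact hdet (by linear_combination d * h0.1 - b * h0.2)
        · by_contra! h0
          exact hconj (by linear_combination conj a * h0.1 - conj c * h0.2)
    _ = (conj (mobius a b c d z))⁻¹ := by simp [mobius]

lemma inv_conj_mobius_zero : (conj (mobius a b c d 0))⁻¹ = a / c := by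
  simp only [mobius, mul_zero, zero_add, map_div₀, inv_div]
  refine div_eq_div_of_mul_eq_mul ?_ (.inl ((map_ne_zero conj).mpr h.d_ne_zero))
    (.inl h.a_ne_zero)
  linear_combination -h.mul_conj_eq

lemma inv_conj_iterate_succ_zero (hdet : a * d - b * c ≠ 0)
    (hne : ∀ k, (mobius a b c d)^[k + 1] 0 ≠ 0) (k : ℕ) :
    (conj ((mobius a b c d)^[k + 1] 0))⁻¹ = (mobius a b c d)^[k] (a / c) := by
  induction k with
  | zero => exact h.inv_conj_mobius_zero
  | succ k ih =>
    rw [Function.iterate_succ_apply' _ (k + 1), Function.iterate_succ_apply' _ k (a / c), ← ih,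
      h.mobius_inv_conj hdet (hne k)]

lemma tendsto_iterate_div_of_tendsto_iterate_zero (hdet : a * d - b * c ≠ 0) {ξ : ℂ}
    (hξ : ξ ∈ unitCircle)
    (h₀ : Tendsto (fun k => (mobius a b c d)^[k] 0) atTop (𝓝 ξ)) :
    (∀ k, c * (mobius a b c d)^[k] (a / c) + d ≠ 0) ∧
      Tendsto (fun k => (mobius a b c d)^[k] (a / c)) atTop (𝓝 ξ) := by
  have hξ₁ : normSq ξ = 1 := by rw [← Complex.sq_norm, show ‖ξ‖ = 1 from hξ, one_pow]
  have hξ₀ : ξ ≠ 0 := by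
    rintro rfl
    simp at hξ₁
  have hne (k : ℕ) : (mobius a b c d)^[k + 1] 0 ≠ 0 := fun hk =>
    hξ₀ (Function.IsPeriodicPt.eq_of_tendsto_iterate hk k.succ_pos h₀).symm
  have hdisk (k : ℕ) : (mobius a b c d)^[k] 0 ∈ unitDisk := by
    induction k with
    | zero => simp [unitDisk]
    | succ k ih => exact Function.iterate_succ_apply' _ _ _ ▸ h.mobius_mem_unitDisk ih
  have hv := h.inv_conj_iterate_succ_zero hdet hne
  have hext (k : ℕ) : (mobius a b c d)^[k] (a / c) ∈ extDisk := by
    rw [← hv, mem_extDisk_iff, normSq_inv, normSq_conj, one_lt_inv₀ (normSq_pos.mpr (hne k))]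
    exact mem_unitDisk_iff.mp (hdisk _)
  refine ⟨fun k hk => ?_, ?_⟩
  · have := hext (k + 1)
    rw [Function.iterate_succ_apply', mobius_eq_zero_of_denom_eq_zero hk] at this
    norm_num [extDisk] at this
  · have hσξ : (conj ξ)⁻¹ = ξ :=
      inv_eq_of_mul_eq_one_left (by rw [mul_conj, hξ₁, Complex.ofReal_one])
    have hσ : ContinuousAt (fun z => (conj z)⁻¹) ξ :=
      continuous_conj.continuousAt.inv₀ ((map_ne_zero conj).mpr hξ₀)
    have := hσ.tendsto.comp (h₀.comp (tendsto_add_atTop_nat 1))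
    rw [hσξ] at this
    exact this.congr hv

end IsScaledU11

section BijOn

variable {a b c d : ℂ} (hbij : Set.BijOn (mobius a b c d) (extDisk \ {z : ℂ | c * z + d = 0})
  (extDisk \ {a / c}))

include hbij

lemma normSq_lt_of_mem_extDisk {z : ℂ} (hz : z ∈ extDisk) (hzp : c * z + d ≠ 0) :
    normSq (c * z + d) < normSq (a * z + b) :=
  (one_lt_normSq_mobius_iff hzp).mp (mem_extDisk_iff.mp (hbij.mapsTo ⟨hz, hzp⟩).1)

lemma normSq_le_of_mem_extDisk {z : ℂ} (hz : z ∈ extDisk) :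
    normSq (c * z + d) ≤ normSq (a * z + b) := by
  by_cases hzp : c * z + d = 0
  · simp [hzp, normSq_nonneg]
  · exact (normSq_lt_of_mem_extDisk hbij hz hzp).le

lemma normSq_le_of_mem_unitDisk (hdet : a * d - b * c ≠ 0) {z : ℂ} (hz : z ∈ unitDisk)
    (hzp : c * z + d ≠ 0) : normSq (a * z + b) ≤ normSq (c * z + d) := by
  by_contra! hlt
  have hgz : mobius a b c d z ∈ extDisk :=
    mem_extDisk_iff.mpr ((one_lt_normSq_mobius_iff hzp).mpr hlt)
  have hne : mobius a b c d z ≠ a / c := by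
    intro heq
    by_cases hc : c = 0
    · rw [heq] at hgz
      norm_num [hc, extDisk] at hgz
    · rw [mobius, div_eq_div_iff hzp hc] at heq
      exact hdet (by linear_combination -heq)
  obtain ⟨w, ⟨hw, hwp⟩, hwz⟩ := hbij.surjOn ⟨hgz, hne⟩
  rw [eq_of_mobius_eq hdet hwp hzp hwz] at hw
  exact lt_asymm (show ‖z‖ < 1 from hz) hw

lemma normSq_eq_of_mem_unitCircle (hdet : a * d - b * c ≠ 0) {z : ℂ} (hz : z ∈ unitCircle) :
    normSq (a * z + b) = normSq (c * z + d) := by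
  have hnum : Continuous fun z => normSq (a * z + b) := by fun_prop
  have hden : Continuous fun z => normSq (c * z + d) := by fun_prop
  have hpole : {z : ℂ | c * z + d = 0}.Subsingleton := by
    intro w (hw : c * w + d = 0) z (hz : c * z + d = 0)
    have hc : c ≠ 0 := by
      rintro rfl
      exact hdet (by simp_all)
    have : c * (w - z) = 0 := by linear_combination hw - hz
    exact sub_eq_zero.mp ((mul_eq_zero.mp this).resolve_left hc)
  have hdense : Dense {z : ℂ | c * z + d ≠ 0} := hpole.countable.dense_compl ℂ
  apply le_antisymm
  · have hsub : unitDisk ∩ {z | c * z + d ≠ 0} ⊆ {z | normSq (a * z + b) ≤ normSq (c * z + d)} :=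
      fun w hw => normSq_le_of_mem_unitDisk hbij hdet hw.1 hw.2
    refine closure_minimal hsub (isClosed_le hnum hden) ?_
    refine closure_minimal (hdense.open_subset_closure_inter ?_) isClosed_closure
      (unitCircle_subset_closure_unitDisk hz)
    exact isOpen_lt continuous_norm continuous_const
  · exact closure_minimal (fun w hw => normSq_le_of_mem_extDisk hbij hw)
      (isClosed_le hden hnum) (unitCircle_subset_closure_extDisk hz)

lemma exists_isScaledU11_of_bijOn (hdet : a * d - b * c ≠ 0) :
    ∃ α, IsScaledU11 a b c d α := by
  have hF (z : ℂ) := normSq_add_sub_normSq_add a b c d z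
  set E := a * conj b - c * conj d
  have hcirc {z : ℂ} (hz : z ∈ unitCircle) :
      0 = (normSq a - normSq c) * normSq z + (normSq b - normSq d) + 2 * (E * z).re := by
    rw [← hF, normSq_eq_of_mem_unitCircle hbij hdet hz, sub_self]
  have h₁ := hcirc (z := 1) (by simp [unitCircle])
  have h₂ := hcirc (z := -1) (by simp [unitCircle])
  have h₃ := hcirc (z := I) (by simp [unitCircle])
  simp only [mul_one, mul_neg, neg_re, mul_I_re, normSq_one, normSq_neg, normSq_I] at h₁ h₂ h₃
  have hE : E = 0 :=
    Complex.ext (by simp only [zero_re]; linarith) (by simp only [zero_im]; linarith)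
  obtain ⟨z, hz, hzp⟩ : ∃ z ∈ extDisk, c * z + d ≠ 0 := by
    by_cases hp : c * 2 + d = 0
    · refine ⟨-2, by norm_num [extDisk], fun hm => hdet ?_⟩
      obtain rfl : c = 0 := by linear_combination (hp - hm) / 4
      obtain rfl : d = 0 := by linear_combination hp
      ring
    · exact ⟨2, by norm_num [extDisk], hp⟩
  have hlt := normSq_lt_of_mem_extDisk hbij hz hzp
  have hFz := hF z
  rw [hE, zero_mul, zero_re] at hFz
  have hz' := mem_extDisk_iff.mp hz
  refine ⟨normSq a - normSq c, ⟨?_, rfl, by linarith, sub_eq_zero.mp hE⟩⟩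
  nlinarith

end BijOn

lemma apply_div_eq_apply_of_pole {β : Type*} [TopologicalSpace β] [T2Space β]
    {a b c d p : ℂ} {W : ℂ → β} (hdet : a * d - b * c ≠ 0)
    (hstep : ∀ z ∈ extDisk, c * z + d ≠ 0 →
      mobius a b c d z ∈ extDisk ∧ W (mobius a b c d z) = W z)
    (hW : ContinuousOn W extDisk) (hp : p ∈ extDisk) (hpole : c * p + d = 0)
    (hq : a / c ∈ extDisk) : W (a / c) = W p := by
  have hc : c ≠ 0 := by
    rintro rfl
    norm_num [extDisk] at hq
  -- `g ∘ g` is regular at the pole `p` and sends it to `a / c = g(∞)`.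
  set G₂ := mobius (a * a + b * c) (a * b + b * d) (c * a + d * c) (c * b + d * d) with hG₂def
  have hden : (c * a + d * c) * p + (c * b + d * d) = -(a * d - b * c) := by
    linear_combination (a + d) * hpole
  have hG₂p : G₂ p = a / c := by
    rw [hG₂def, mobius, hden, div_eq_div_iff (neg_ne_zero.mpr hdet) hc]
    linear_combination (a * a + b * c) * hpole
  have hG₂ : ContinuousAt G₂ p :=
    ContinuousAt.div (by fun_prop) (by fun_prop) (hden ▸ neg_ne_zero.mpr hdet)
  have hlim : Tendsto (W ∘ G₂) (𝓝[≠] p) (𝓝 (W (a / c))) := by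
    have := (hW.continuousAt (isOpen_extDisk.mem_nhds hq)).tendsto.comp (hG₂p ▸ hG₂.tendsto)
    exact this.mono_left nhdsWithin_le_nhds
  refine tendsto_nhds_unique (hlim.congr' ?_)
    ((hW.continuousAt (isOpen_extDisk.mem_nhds hp)).tendsto.mono_left nhdsWithin_le_nhds)
  have hden_cont : ContinuousAt (fun z => (c * a + d * c) * z + (c * b + d * d)) p := by fun_prop
  have hnear : ∀ᶠ z in 𝓝 p, z ∈ extDisk ∧ (c * a + d * c) * z + (c * b + d * d) ≠ 0 :=
    (isOpen_extDisk.eventually_mem hp).and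
      (hden_cont.eventually_ne (hden ▸ neg_ne_zero.mpr hdet))
  filter_upwards [nhdsWithin_le_nhds hnear, self_mem_nhdsWithin] with z ⟨hz, hz₂⟩ (hzp : z ≠ p)
  have hzd : c * z + d ≠ 0 := fun h => hzp (mul_left_cancel₀ hc (by linear_combination h - hpole))
  have hgzd : c * mobius a b c d z + d ≠ 0 := mul_mobius_add hzd ▸ div_ne_zero hz₂ hzd
  obtain ⟨hgz, hW₁⟩ := hstep z hz hzd
  rw [Function.comp_apply, hG₂def, ← mobius_mobius hzd, (hstep _ hgz hgzd).2, hW₁]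

lemma not_bVanishRel_of_tendsto {X : Set ℂ} {φ : ℂ → ℂ} {ξ : ℂ} (hξ : ξ ∈ unitCircle)
    (hξX : ξ ∉ X) {v : ℕ → ℂ} {C : ℝ} (hC : 0 < C)
    (hv : ∀ k, v k ∈ extDisk ∧ bweight (v k) * ‖φ (v k)‖ = C) (hlim : Tendsto v atTop (𝓝 ξ)) :
    ¬ BVanishRel X φ := by
  intro hvan
  obtain ⟨K, hK, hKX, hKlt⟩ := hvan C hC
  have hvK (k : ℕ) : v k ∈ K := by
    by_contra hk
    exact (hKlt _ ⟨(hv k).1, hk⟩).ne (hv k).2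
  rcases hKX (hK.isClosed.mem_of_tendsto hlim (.of_forall hvK)) with hξD | hξX'
  · exact (show 1 < ‖ξ‖ from hξD).ne' hξ
  · exact hξX hξX'

theorem not_vanish_of_invariant_general (X : Set ℂ) (a b c d : ℂ)
    (hdet : a * d - b * c ≠ 0)
    (hbij : Set.BijOn (mobius a b c d) (extDisk \ {z : ℂ | c * z + d = 0})
      (extDisk \ {a / c}))
    (φ : ℂ → ℂ) (hφ : MemB φ)
    (hinv : ∀ z ∈ extDisk, c * z + d ≠ 0 →
      φ (mobius a b c d z) * (deriv (mobius a b c d) z) ^ 2 = φ z)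
    (z₀ : ℂ) (hz₀ : z₀ ∈ extDisk) (hφz₀ : φ z₀ ≠ 0)
    (ξ : ℂ) (hξ : ξ ∈ unitCircle) (hξX : ξ ∉ X)
    (horb : Tendsto (fun n => (mobius a b c d)^[n] z₀) atTop (𝓝 ξ)) :
    ¬ BVanishRel X φ := by
  obtain ⟨α, hU⟩ := exists_isScaledU11_of_bijOn hbij hdet
  set W : ℂ → ℝ := fun z => bweight z * ‖φ z‖
  have hstep : ∀ z ∈ extDisk, c * z + d ≠ 0 →
      mobius a b c d z ∈ extDisk ∧ W (mobius a b c d z) = W z := fun z hz hzp =>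
    ⟨(hbij.mapsTo ⟨hz, hzp⟩).1, hU.bweight_mul_norm_mobius hzp (hinv z hz hzp)⟩
  have hW₀ : 0 < W z₀ :=
    mul_pos (bweight_eq z₀ ▸ pow_pos (sub_pos.mpr (mem_extDisk_iff.mp hz₀)) 2)
      (norm_pos_iff.mpr hφz₀)
  by_cases hpole : ∃ n, c * (mobius a b c d)^[n] z₀ + d = 0
  · classical
    have hp := Nat.find_spec hpole
    obtain ⟨hpD, hWp⟩ := iterate_mem_and_apply_eq hstep hz₀ fun k hk => Nat.find_min hpole hk
    have h₀ : Tendsto (fun k => (mobius a b c d)^[k] 0) atTop (𝓝 ξ) :=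
      tendsto_iterate_of_iterate_eq horb
        (by rw [Function.iterate_succ_apply', mobius_eq_zero_of_denom_eq_zero hp])
    obtain ⟨hnopole, hlim⟩ := hU.tendsto_iterate_div_of_tendsto_iterate_zero hdet hξ h₀
    have hq := hU.div_mem_extDisk (by rintro rfl; exact hdet (by simp_all))
    have hWq := apply_div_eq_apply_of_pole hdet hstep
      ((by unfold bweight; fun_prop : Continuous bweight).continuousOn.mul hφ.1.continuousOn.norm)
      hpD hp hq
    refine not_bVanishRel_of_tendsto hξ hξX hW₀ (fun k => ?_) hlim
    obtain ⟨hmem, hWk⟩ := iterate_mem_and_apply_eq hstep hq fun j _ => hnopole j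
    exact ⟨hmem, hWk.trans (hWq.trans hWp)⟩
  · simp only [not_exists] at hpole
    exact not_bVanishRel_of_tendsto hξ hξX hW₀
      (fun k => iterate_mem_and_apply_eq hstep hz₀ fun j _ => hpole j) horb

/-- If `φ ∈ B(𝔻*)` satisfies the invariance `φ(g(z)) g'(z)² = φ(z)` for a
Möbius automorphism `g` of `𝔻*`, and there are `z₀ ∈ 𝔻*` with `φ(z₀) ≠ 0` and
`ξ ∈ 𝕊 \ X` with `gⁿ(z₀) → ξ`, then `φ ∉ B_♯^X(𝔻*)`. -/
theorem not_vanish_of_invariant (X : Set ℂ) (hX : X ⊆ unitCircle) (a b c d : ℂ)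
    (hdet : a * d - b * c ≠ 0)
    (hbij : Set.BijOn (mobius a b c d) (extDisk \ {z : ℂ | c * z + d = 0})
      (extDisk \ {a / c}))
    (φ : ℂ → ℂ) (hφ : MemB φ)
    (hinv : ∀ z ∈ extDisk, c * z + d ≠ 0 →
      φ (mobius a b c d z) * (deriv (mobius a b c d) z) ^ 2 = φ z)
    (z₀ : ℂ) (hz₀ : z₀ ∈ extDisk) (hφz₀ : φ z₀ ≠ 0)
    (ξ : ℂ) (hξ : ξ ∈ unitCircle) (hξX : ξ ∉ X)
    (horb : Tendsto (fun n => (mobius a b c d)^[n] z₀) atTop (𝓝 ξ)) :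
    ¬ BVanishRel X φ :=
  not_vanish_of_invariant_general X a b c d hdet hbij φ hφ hinv z₀ hz₀ hφz₀ ξ hξ hξX horb
end
end

section
/- Let X ⊆ 𝕊, let φ ∈ B_♯^X(𝔻*), and let g be a Möbius transformation mapping 𝔻* bijectively onto itself such that there exists ξ ∈ 𝕊 with ξ ∉ X and gⁿ(w) → ξ as n → ∞ for every w ∈ 𝔻*. Then for every z ∈ 𝔻*, the iterated pullbacks converge to zero pointwise: (g*)ⁿφ(z) = φ(gⁿ(z)) · ((gⁿ)'(z))² → 0 as n → ∞. -/
open MeasureTheory Filter Topology ENNReal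

noncomputable section

/-!
A Möbius map `g` carrying `𝔻*` onto itself satisfies
`|az + b|² - |cz + d|² = |ad - bc| (|z|² - 1)`, so the weight is invariant under pull-back:
`|(gⁿ)'(z)|² (|z|² - 1)² = (|gⁿ z|² - 1)²`. Hence `|(g*)ⁿφ(z)|` is `(|w|² - 1)² |φ(w)|` at
`w = gⁿ z` divided by the constant `(|z|² - 1)²`, and this tends to `0` because `gⁿ z → ξ`
eventually leaves every compact `K* ⊆ 𝔻* ∪ X`. If instead the orbit of `z` hits the pole of `g`
(which `g` sends to `0` under the convention `x / 0 = 0`), it stays in the unit disk from then on,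
so `gⁿ` is discontinuous at `z` and `deriv` returns its junk value `0`.
-/

open Complex ComplexConjugate

section Mobius

variable {a b c d z : ℂ}

theorem mobius_of_denom_eq_zero (a b : ℂ) (h : c * z + d = 0) : mobius a b c d z = 0 := by
  simp [mobius, h]

theorem eq_neg_div_of_denom_eq_zero (hdet : a * d - b * c ≠ 0) (h : c * z + d = 0) :
    z = -d / c := by
  have hc : c ≠ 0 := by
    rintro rfl
    simp_all
  field_simp
  linear_combination h

theorem denom_ne_zero_of_ne_neg_div (hdet : a * d - b * c ≠ 0) (hz : z ≠ -d / c) :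
    c * z + d ≠ 0 :=
  mt (eq_neg_div_of_denom_eq_zero hdet) hz

theorem mobius_inv_mobius (hdet : a * d - b * c ≠ 0) (hz : c * z + d ≠ 0) :
    mobius d (-b) (-c) a (mobius a b c d z) = z := by
  have hnum : d * ((a * z + b) / (c * z + d)) + -b = (a * d - b * c) * z / (c * z + d) := by
    rw [eq_div_iff hz]
    linear_combination d * div_mul_cancel₀ (a * z + b) hz
  have hden : -c * ((a * z + b) / (c * z + d)) + a = (a * d - b * c) / (c * z + d) := by
    field_simp
    ring
  simp only [mobius, hnum, hden]
  field_simp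

theorem injOn_mobius (hdet : a * d - b * c ≠ 0) :
    Set.InjOn (mobius a b c d) {z | c * z + d ≠ 0} := fun z hz w hw h => by
  rw [← mobius_inv_mobius hdet hz, h, mobius_inv_mobius hdet hw]

theorem mobius_ne_div (hdet : a * d - b * c ≠ 0) (hc : c ≠ 0) (hz : c * z + d ≠ 0) :
    mobius a b c d z ≠ a / c := fun h => by
  rw [mobius, div_eq_div_iff hz hc] at h
  exact hdet (by linear_combination -h)

theorem finite_preimage_mobius (hdet : a * d - b * c ≠ 0) (y : ℂ) :
    (mobius a b c d ⁻¹' {y}).Finite := by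
  refine (Set.toFinite {-d / c, mobius d (-b) (-c) a y}).subset fun z hz => ?_
  by_cases hden : c * z + d = 0
  · exact Or.inl (eq_neg_div_of_denom_eq_zero hdet hden)
  · exact Or.inr (by rw [← Set.mem_singleton_iff.1 hz, mobius_inv_mobius hdet hden]; rfl)

theorem Set.Finite.preimage_iterate_mobius (hdet : a * d - b * c ≠ 0) {s : Set ℂ}
    (hs : s.Finite) (n : ℕ) : ((mobius a b c d)^[n] ⁻¹' s).Finite := by
  induction n with
  | zero => simpa using hs
  | succ n ih =>
    rw [Function.iterate_succ, Set.preimage_comp]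
    exact ih.preimage' fun y _ => finite_preimage_mobius hdet y

theorem hasDerivAt_mobius (hz : c * z + d ≠ 0) :
    HasDerivAt (mobius a b c d) ((a * d - b * c) / (c * z + d) ^ 2) z := by
  have hnum : HasDerivAt (fun z : ℂ => a * z + b) a z := by
    simpa using ((hasDerivAt_id z).const_mul a).add_const b
  have hden : HasDerivAt (fun z : ℂ => c * z + d) c z := by
    simpa using ((hasDerivAt_id z).const_mul c).add_const d
  rw [show (a * d - b * c) / (c * z + d) ^ 2
      = (a * (c * z + d) - (a * z + b) * c) / (c * z + d) ^ 2 by ring]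
  exact hnum.div hden hz

theorem one_lt_norm_mobius_iff (hz : c * z + d ≠ 0) :
    1 < ‖mobius a b c d z‖ ↔ ‖c * z + d‖ ^ 2 < ‖a * z + b‖ ^ 2 := by
  rw [mobius, norm_div, one_lt_div (norm_pos_iff.2 hz)]
  exact (pow_lt_pow_iff_left₀ (norm_nonneg _) (norm_nonneg _) two_ne_zero).symm

end Mobius

theorem closure_extDisk : closure extDisk = {z : ℂ | 1 ≤ ‖z‖} := by
  have h : extDisk = (Metric.closedBall (0 : ℂ) 1)ᶜ := by
    ext z
    simp [extDisk]
  rw [h, closure_compl, interior_closedBall _ one_ne_zero]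
  ext z
  simp

theorem sq_norm_add_sub_sq_norm_add (a b c d z : ℂ) :
    ‖a * z + b‖ ^ 2 - ‖c * z + d‖ ^ 2 = (‖a‖ ^ 2 - ‖c‖ ^ 2) * ‖z‖ ^ 2
      + 2 * ((a * conj b - c * conj d) * z).re + (‖b‖ ^ 2 - ‖d‖ ^ 2) := by
  simp only [Complex.sq_norm, normSq_apply, mul_re, mul_im, add_re, add_im, sub_re, sub_im,
    conj_re, conj_im]
  ring

theorem eq_zero_of_forall_norm_eq_one_ne {s : ℝ} {β p : ℂ}
    (h : ∀ z : ℂ, ‖z‖ = 1 → z ≠ p → s + 2 * (β * z).re = 0) : s = 0 ∧ β = 0 := by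
  have h₁ : 1 ≠ p → s + 2 * β.re = 0 := fun hp => by simpa using h 1 (by simp) hp
  have h₂ : -1 ≠ p → s - 2 * β.re = 0 := fun hp => by
    simpa [sub_eq_add_neg] using h (-1) (by simp) hp
  have h₃ : I ≠ p → s - 2 * β.im = 0 := fun hp => by
    simpa [sub_eq_add_neg] using h I (by simp) hp
  have h₄ : -I ≠ p → s + 2 * β.im = 0 := fun hp => by simpa using h (-I) (by simp) hp
  suffices s = 0 ∧ β.re = 0 ∧ β.im = 0 from ⟨this.1, Complex.ext this.2.1 this.2.2⟩
  rcases eq_or_ne 1 p with rfl | hp₁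
  · have := h₂ (by norm_num)
    have := h₃ (by norm_num [Complex.ext_iff])
    have := h₄ (by norm_num [Complex.ext_iff])
    exact ⟨by linarith, by linarith, by linarith⟩
  have := h₁ hp₁
  rcases eq_or_ne (-1) p with rfl | hp₂
  · have := h₃ (by norm_num [Complex.ext_iff])
    have := h₄ (by norm_num [Complex.ext_iff])
    exact ⟨by linarith, by linarith, by linarith⟩
  have := h₂ hp₂
  rcases eq_or_ne I p with rfl | hp₃
  · have := h₄ (by norm_num [Complex.ext_iff])
    exact ⟨by linarith, by linarith, by linarith⟩
  · have := h₃ hp₃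
    exact ⟨by linarith, by linarith, by linarith⟩

theorem norm_det_eq_of_sq_norm_sub {a b c d : ℂ} {A : ℝ} (hA : 0 < A)
    (hac : ‖a‖ ^ 2 - ‖c‖ ^ 2 = A) (hbd : ‖b‖ ^ 2 - ‖d‖ ^ 2 = -A) (hab : a * conj b = c * conj d) :
    ‖a * d - b * c‖ = A := by
  simp only [Complex.sq_norm] at hac hbd
  have hnormSq : normSq a * normSq b = normSq c * normSq d := by
    simpa using congrArg normSq hab
  have hd : normSq d = normSq c + A := by
    have h : A * (normSq d - normSq c - A) = 0 := by
      linear_combination hnormSq - normSq b * hac - (normSq c + A) * hbd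
    linarith [(mul_eq_zero.1 h).resolve_left hA.ne']
  have hcross : (a * d * conj (b * c)).re = normSq c * normSq d := by
    rw [map_mul, show a * d * (conj b * conj c) = (a * conj b) * (d * conj c) by ring, hab,
      show c * conj d * (d * conj c) = (c * conj c) * (d * conj d) by ring, mul_conj, mul_conj,
      ← Complex.ofReal_mul, ofReal_re]
  have hsq : ‖a * d - b * c‖ ^ 2 = A ^ 2 := by
    rw [Complex.sq_norm, normSq_sub, normSq_mul, normSq_mul, hcross]
    linear_combination normSq d * hac + normSq c * hbd + A * hd
  exact (sq_eq_sq₀ (norm_nonneg _) hA.le).1 hsq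

section BijOn

variable {a b c d z : ℂ}

theorem sq_norm_denom_lt_of_bijOn
    (hbij : Set.BijOn (mobius a b c d) (extDisk \ {z : ℂ | c * z + d = 0}) (extDisk \ {a / c}))
    (hz : 1 < ‖z‖) (hden : c * z + d ≠ 0) : ‖c * z + d‖ ^ 2 < ‖a * z + b‖ ^ 2 :=
  (one_lt_norm_mobius_iff hden).1 (hbij.mapsTo ⟨hz, hden⟩).1

theorem sq_norm_denom_le_of_bijOn
    (hbij : Set.BijOn (mobius a b c d) (extDisk \ {z : ℂ | c * z + d = 0}) (extDisk \ {a / c}))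
    (hz : 1 ≤ ‖z‖) : ‖c * z + d‖ ^ 2 ≤ ‖a * z + b‖ ^ 2 := by
  have hclosed : IsClosed {z : ℂ | ‖c * z + d‖ ^ 2 ≤ ‖a * z + b‖ ^ 2} :=
    isClosed_le (by fun_prop) (by fun_prop)
  refine hclosed.closure_subset_iff.2 (fun w hw => ?_) (by rw [closure_extDisk]; exact hz)
  by_cases hden : c * w + d = 0
  · change ‖c * w + d‖ ^ 2 ≤ ‖a * w + b‖ ^ 2
    rw [hden, norm_zero]
    exact pow_le_pow_left₀ le_rfl (norm_nonneg _) 2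
  · exact (sq_norm_denom_lt_of_bijOn hbij hw hden).le

theorem sq_norm_num_le_of_bijOn (hdet : a * d - b * c ≠ 0)
    (hbij : Set.BijOn (mobius a b c d) (extDisk \ {z : ℂ | c * z + d = 0}) (extDisk \ {a / c}))
    (hz : ‖z‖ = 1) (hden : c * z + d ≠ 0) : ‖a * z + b‖ ^ 2 ≤ ‖c * z + d‖ ^ 2 := by
  by_contra! hlt
  have hgz : 1 < ‖mobius a b c d z‖ := (one_lt_norm_mobius_iff hden).2 hlt
  have hne : mobius a b c d z ≠ a / c := by
    rcases eq_or_ne c 0 with rfl | hc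
    · rintro h
      rw [h] at hgz
      norm_num at hgz
    · exact mobius_ne_div hdet hc hden
  obtain ⟨w, ⟨hw, hwden⟩, hgw⟩ := hbij.surjOn ⟨hgz, hne⟩
  have hwz : w = z := injOn_mobius hdet hwden hden hgw
  exact (hwz ▸ hw : 1 < ‖z‖).ne' hz

theorem exists_sq_norm_sub_eq_of_bijOn (hdet : a * d - b * c ≠ 0)
    (hbij : Set.BijOn (mobius a b c d) (extDisk \ {z : ℂ | c * z + d = 0}) (extDisk \ {a / c})) :
    ∃ A : ℝ, 0 < A ∧ ‖a * d - b * c‖ = A ∧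
      ∀ z : ℂ, ‖a * z + b‖ ^ 2 - ‖c * z + d‖ ^ 2 = A * (‖z‖ ^ 2 - 1) := by
  set A := ‖a‖ ^ 2 - ‖c‖ ^ 2
  -- On the circle the form is `≥ 0` as a limit of points of `𝔻*`, and `≤ 0` because otherwise
  -- `g z` would lie in `𝔻*`, forcing `z ∈ 𝔻*` by injectivity.
  have hcircle : ∀ z : ℂ, ‖z‖ = 1 → z ≠ -d / c →
      A + (‖b‖ ^ 2 - ‖d‖ ^ 2) + 2 * ((a * conj b - c * conj d) * z).re = 0 := by
    intro z hz hzp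
    have h := sq_norm_add_sub_sq_norm_add a b c d z
    rw [hz, one_pow, mul_one] at h
    linarith [sq_norm_denom_le_of_bijOn hbij hz.ge,
      sq_norm_num_le_of_bijOn hdet hbij hz (denom_ne_zero_of_ne_neg_div hdet hzp)]
  obtain ⟨hs, hβ⟩ := eq_zero_of_forall_norm_eq_one_ne hcircle
  have hform : ∀ z : ℂ, ‖a * z + b‖ ^ 2 - ‖c * z + d‖ ^ 2 = A * (‖z‖ ^ 2 - 1) := fun z => by
    rw [sq_norm_add_sub_sq_norm_add, hβ, zero_mul, zero_re]
    linear_combination hs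
  have hA : 0 < A := by
    obtain ⟨z, hz, hzp⟩ : ∃ z : ℂ, 1 < ‖z‖ ∧ z ≠ -d / c := by
      by_cases h : -d / c = 2
      · exact ⟨3, by norm_num, by rw [h]; norm_num⟩
      · exact ⟨2, by norm_num, Ne.symm h⟩
    have := sq_norm_denom_lt_of_bijOn hbij hz (denom_ne_zero_of_ne_neg_div hdet hzp)
    nlinarith [hform z, (one_lt_sq_iff₀ (norm_nonneg z)).2 hz]
  exact ⟨A, hA, norm_det_eq_of_sq_norm_sub hA rfl (by linarith) (sub_eq_zero.1 hβ), hform⟩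

end BijOn

section Dynamics

variable {a b c d z : ℂ} {A : ℝ}

theorem sq_norm_mobius_sub_one
    (hform : ∀ z : ℂ, ‖a * z + b‖ ^ 2 - ‖c * z + d‖ ^ 2 = A * (‖z‖ ^ 2 - 1))
    (hz : c * z + d ≠ 0) :
    ‖mobius a b c d z‖ ^ 2 - 1 = A * (‖z‖ ^ 2 - 1) / ‖c * z + d‖ ^ 2 := by
  have hpos : 0 < ‖c * z + d‖ ^ 2 := by positivity
  rw [mobius, norm_div, div_pow, eq_div_iff hpos.ne', sub_mul, div_mul_cancel₀ _ hpos.ne',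
    ← hform z]
  ring

theorem norm_deriv_mobius_mul (habs : ‖a * d - b * c‖ = A)
    (hform : ∀ z : ℂ, ‖a * z + b‖ ^ 2 - ‖c * z + d‖ ^ 2 = A * (‖z‖ ^ 2 - 1))
    (hz : c * z + d ≠ 0) :
    ‖(a * d - b * c) / (c * z + d) ^ 2‖ * (‖z‖ ^ 2 - 1) = ‖mobius a b c d z‖ ^ 2 - 1 := by
  rw [sq_norm_mobius_sub_one hform hz, norm_div, norm_pow, habs]
  ring

theorem exists_hasDerivAt_iterate_mobius (habs : ‖a * d - b * c‖ = A)
    (hform : ∀ z : ℂ, ‖a * z + b‖ ^ 2 - ‖c * z + d‖ ^ 2 = A * (‖z‖ ^ 2 - 1)) :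
    ∀ n : ℕ, (∀ i < n, c * (mobius a b c d)^[i] z + d ≠ 0) →
      ∃ D, HasDerivAt (mobius a b c d)^[n] D z ∧
        ‖D‖ * (‖z‖ ^ 2 - 1) = ‖(mobius a b c d)^[n] z‖ ^ 2 - 1
  | 0, _ => ⟨1, by simpa using hasDerivAt_id z, by simp⟩
  | n + 1, hden => by
    obtain ⟨D, hD, hDnorm⟩ :=
      exists_hasDerivAt_iterate_mobius habs hform n fun i hi => hden i (by omega)
    have hw := hden n n.lt_succ_self
    refine ⟨_, Function.iterate_succ' _ n ▸ (hasDerivAt_mobius hw).comp z hD, ?_⟩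
    rw [norm_mul, mul_assoc, hDnorm, norm_deriv_mobius_mul habs hform hw,
      Function.iterate_succ_apply']

theorem iterate_mobius_mem_extDisk (hA : 0 < A)
    (hform : ∀ z : ℂ, ‖a * z + b‖ ^ 2 - ‖c * z + d‖ ^ 2 = A * (‖z‖ ^ 2 - 1)) (hz : z ∈ extDisk) :
    ∀ n : ℕ, (∀ i < n, c * (mobius a b c d)^[i] z + d ≠ 0) → (mobius a b c d)^[n] z ∈ extDisk
  | 0, _ => hz
  | n + 1, hden => by
    have hw := iterate_mobius_mem_extDisk hA hform hz n fun i hi => hden i (by omega)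
    have hw' : 1 < ‖(mobius a b c d)^[n] z‖ ^ 2 := (one_lt_sq_iff₀ (norm_nonneg _)).2 hw
    have hden' := hden n n.lt_succ_self
    rw [Function.iterate_succ_apply']
    change 1 < ‖mobius a b c d _‖
    rw [← one_lt_sq_iff₀ (norm_nonneg _), ← sub_pos, sq_norm_mobius_sub_one hform hden']
    exact div_pos (mul_pos hA (sub_pos.2 hw')) (pow_pos (norm_pos_iff.2 hden') 2)

theorem mapsTo_mobius_ball (hA : 0 < A)
    (hform : ∀ z : ℂ, ‖a * z + b‖ ^ 2 - ‖c * z + d‖ ^ 2 = A * (‖z‖ ^ 2 - 1)) :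
    Set.MapsTo (mobius a b c d) (Metric.ball 0 1) (Metric.ball 0 1) := by
  intro w hw
  have hw' : ‖w‖ ^ 2 - 1 < 0 := by
    rw [mem_ball_zero_iff] at hw
    nlinarith [norm_nonneg w]
  have hden : c * w + d ≠ 0 := fun h => by
    have := hform w
    rw [h, norm_zero] at this
    nlinarith [sq_nonneg ‖a * w + b‖]
  rw [mem_ball_zero_iff, ← sq_lt_one_iff₀ (norm_nonneg _), ← sub_neg,
    sq_norm_mobius_sub_one hform hden]
  exact div_neg_of_neg_of_pos (mul_neg_of_pos_of_neg hA hw') (pow_pos (norm_pos_iff.2 hden) 2)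

theorem norm_iterate_mobius_lt_one (hA : 0 < A)
    (hform : ∀ z : ℂ, ‖a * z + b‖ ^ 2 - ‖c * z + d‖ ^ 2 = A * (‖z‖ ^ 2 - 1)) {k n : ℕ}
    (hk : c * (mobius a b c d)^[k] z + d = 0) (hkn : k < n) :
    ‖(mobius a b c d)^[n] z‖ < 1 := by
  obtain ⟨m, rfl⟩ : ∃ m, n = m + (k + 1) := ⟨n - (k + 1), by omega⟩
  rw [Function.iterate_add_apply, Function.iterate_succ_apply', mobius_of_denom_eq_zero a b hk,
    ← mem_ball_zero_iff]
  exact (mapsTo_mobius_ball hA hform).iterate m (Metric.mem_ball_self one_pos)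

theorem not_continuousAt_iterate_mobius (hdet : a * d - b * c ≠ 0) (hA : 0 < A)
    (hform : ∀ z : ℂ, ‖a * z + b‖ ^ 2 - ‖c * z + d‖ ^ 2 = A * (‖z‖ ^ 2 - 1)) {n : ℕ}
    (hz : z ∈ extDisk) (hn : ‖(mobius a b c d)^[n] z‖ < 1) :
    ¬ ContinuousAt (mobius a b c d)^[n] z := by
  intro hcont
  set S := ⋃ i ∈ Finset.range n, (mobius a b c d)^[i] ⁻¹' {w | c * w + d = 0}
  have hS : S.Finite := by
    have hpole : {w : ℂ | c * w + d = 0}.Finite :=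
      (Set.finite_singleton (-d / c)).subset fun w hw => eq_neg_div_of_denom_eq_zero hdet hw
    exact (Finset.range n).finite_toSet.biUnion fun i _ => hpole.preimage_iterate_mobius hdet i
  have hsub : extDisk ∩ (mobius a b c d)^[n] ⁻¹' Metric.ball 0 1 ⊆ S := by
    rintro w ⟨hw, hwn⟩
    by_contra hwS
    simp only [S, Set.mem_iUnion, Set.mem_preimage, Finset.mem_range, not_exists] at hwS
    have := iterate_mobius_mem_extDisk hA hform hw n fun i hi => hwS i hi
    exact (mem_ball_zero_iff.1 hwn).not_gt this
  have hnhds : extDisk ∩ (mobius a b c d)^[n] ⁻¹' Metric.ball 0 1 ∈ 𝓝 z :=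
    Filter.inter_mem ((isOpen_lt continuous_const continuous_norm).mem_nhds hz)
      (hcont.preimage_mem_nhds (Metric.isOpen_ball.mem_nhds (mem_ball_zero_iff.2 hn)))
  exact infinite_of_mem_nhds z (Filter.mem_of_superset hnhds hsub) hS

end Dynamics

theorem BVanishRel.tendsto_bweight_mul_norm {X : Set ℂ} {φ : ℂ → ℂ} (hvan : BVanishRel X φ)
    {ξ : ℂ} (hξ : ξ ∈ unitCircle) (hξX : ξ ∉ X) {u : ℕ → ℂ} (hu : ∀ n, u n ∈ extDisk)
    (hlim : Tendsto u atTop (𝓝 ξ)) :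
    Tendsto (fun n => bweight (u n) * ‖φ (u n)‖) atTop (𝓝 0) := by
  refine tendsto_order.2 ⟨fun ε hε => Eventually.of_forall fun n => ?_, fun ε hε => ?_⟩
  · exact hε.trans_le (mul_nonneg (sq_nonneg _) (norm_nonneg _))
  obtain ⟨K, hK, hKsub, hKε⟩ := hvan ε hε
  have hξK : ξ ∉ K := fun h =>
    (hKsub h).elim (fun h' => (h' : 1 < ‖ξ‖).ne' hξ) hξX
  filter_upwards [hlim.eventually_mem (hK.isClosed.isOpen_compl.mem_nhds hξK)] with n hn
  exact hKε (u n) ⟨hu n, hn⟩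

theorem pullback_iterates_tendsto_zero_general (X : Set ℂ)
    (a b c d : ℂ) (hdet : a * d - b * c ≠ 0)
    (hbij : Set.BijOn (mobius a b c d) (extDisk \ {z : ℂ | c * z + d = 0})
      (extDisk \ {a / c}))
    (φ : ℂ → ℂ) (hvan : BVanishRel X φ)
    (ξ : ℂ) (hξ : ξ ∈ unitCircle) (hξX : ξ ∉ X)
    (horb : ∀ w ∈ extDisk, Tendsto (fun n => (mobius a b c d)^[n] w) atTop (𝓝 ξ)) :
    ∀ z ∈ extDisk,
      Tendsto (fun n : ℕ =>
          φ ((mobius a b c d)^[n] z) * (deriv ((mobius a b c d)^[n]) z) ^ 2)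
        atTop (𝓝 0) := by
  intro z hz
  obtain ⟨A, hA, habs, hform⟩ := exists_sq_norm_sub_eq_of_bijOn hdet hbij
  by_cases hpole : ∃ k, c * (mobius a b c d)^[k] z + d = 0
  · obtain ⟨k, hk⟩ := hpole
    refine tendsto_const_nhds.congr' ?_
    filter_upwards [eventually_gt_atTop k] with n hn
    have hnd : ¬ DifferentiableAt ℂ (mobius a b c d)^[n] z := fun h =>
      not_continuousAt_iterate_mobius hdet hA hform hz
        (norm_iterate_mobius_lt_one hA hform hk hn) h.continuousAt
    rw [deriv_zero_of_not_differentiableAt hnd]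
    ring
  · have hden (n : ℕ) : ∀ i < n, c * (mobius a b c d)^[i] z + d ≠ 0 :=
      fun i _ h => hpole ⟨i, h⟩
    choose D hD hDnorm using fun n => exists_hasDerivAt_iterate_mobius habs hform n (hden n)
    have hlim := (hvan.tendsto_bweight_mul_norm hξ hξX
      (fun n => iterate_mobius_mem_extDisk hA hform hz n (hden n)) (horb z hz)).div_const
        (bweight z)
    rw [zero_div] at hlim
    refine tendsto_zero_iff_norm_tendsto_zero.2 (hlim.congr fun n => ?_)
    have hz₁ : ‖z‖ ^ 2 - 1 ≠ 0 := (sub_pos.2 ((one_lt_sq_iff₀ (norm_nonneg z)).2 hz)).ne'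
    rw [(hD n).deriv, norm_mul, norm_pow, bweight, bweight, ← hDnorm n]
    field_simp

/-- If `φ ∈ B_♯^X(𝔻*)` and `g` is a Möbius automorphism of `𝔻*` whose
iterates converge on `𝔻*` to a point `ξ ∈ 𝕊 \ X`, then the iterated pullbacks
`(g*)ⁿφ(z) = φ(gⁿ(z)) ((gⁿ)'(z))²` converge to `0` pointwise on `𝔻*`. -/
theorem pullback_iterates_tendsto_zero (X : Set ℂ) (hX : X ⊆ unitCircle)
    (a b c d : ℂ) (hdet : a * d - b * c ≠ 0)
    (hbij : Set.BijOn (mobius a b c d) (extDisk \ {z : ℂ | c * z + d = 0})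
      (extDisk \ {a / c}))
    (φ : ℂ → ℂ) (hφ : MemB φ) (hvan : BVanishRel X φ)
    (ξ : ℂ) (hξ : ξ ∈ unitCircle) (hξX : ξ ∉ X)
    (horb : ∀ w ∈ extDisk, Tendsto (fun n => (mobius a b c d)^[n] w) atTop (𝓝 ξ)) :
    ∀ z ∈ extDisk,
      Tendsto (fun n : ℕ =>
          φ ((mobius a b c d)^[n] z) * (deriv ((mobius a b c d)^[n]) z) ^ 2)
        atTop (𝓝 0) :=
  pullback_iterates_tendsto_zero_general X a b c d hdet hbij φ hvan ξ hξ hξX horb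
end
end

section
/- Let X ⊆ 𝕊, let K ⊆ 𝔻 ∪ X be compact with K ∩ 𝔻 nonempty, and let R > 0. Then the closure in ℂ of the set E = {z ∈ 𝔻 : there exists w ∈ K ∩ 𝔻 with d_H(z, w) ≤ R} is a compact subset of 𝔻 ∪ X; in particular, every accumulation point of E lying on the unit circle 𝕊 belongs to X. -/
open MeasureTheory

noncomputable section

/-- The hyperbolic (Poincaré) distance on the unit disk:
`d_H(z,w) = log((1+t)/(1−t))` with `t = |z−w| / |1 − conj(w) z|`. -/
def hypDist (z w : ℂ) : ℝ :=
  Real.log ((1 + ‖(z - w) / (1 - (starRingEnd ℂ) w * z)‖) /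
    (1 - ‖(z - w) / (1 - (starRingEnd ℂ) w * z)‖))

/-!
A point `z` within hyperbolic distance `R` of some `w ∈ 𝔻` satisfies
`|z - w| ≤ (e^R - 1)(1 - |z|)`: hyperbolic balls shrink in Euclidean size linearly as they
approach the circle. Hence if `z ∈ E` tends to `ζ ∈ 𝕊`, the corresponding points `w ∈ K`
tend to `ζ` as well, so `ζ ∈ K ⊆ 𝔻 ∪ X`; compactness follows since `E` is bounded.
-/

open Complex

def pseudoHypDist (z w : ℂ) : ℝ := ‖(z - w) / (1 - (starRingEnd ℂ) w * z)‖

theorem normSq_one_sub_conj_mul_sub_normSq_sub (z w : ℂ) :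
    normSq (1 - (starRingEnd ℂ) w * z) - normSq (z - w) = (1 - normSq z) * (1 - normSq w) := by
  simp only [normSq_apply, sub_re, sub_im, mul_re, mul_im, one_re, one_im, conj_re, conj_im]
  ring

theorem norm_sub_lt_norm_one_sub_conj_mul {z w : ℂ} (hz : ‖z‖ < 1) (hw : ‖w‖ < 1) :
    ‖z - w‖ < ‖1 - (starRingEnd ℂ) w * z‖ := by
  have h := normSq_one_sub_conj_mul_sub_normSq_sub z w
  simp only [normSq_eq_norm_sq] at h
  have hz' : 0 < 1 - ‖z‖ ^ 2 := by nlinarith [norm_nonneg z]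
  have hw' : 0 < 1 - ‖w‖ ^ 2 := by nlinarith [norm_nonneg w]
  refine lt_of_pow_lt_pow_left₀ 2 (norm_nonneg _) ?_
  nlinarith [mul_pos hz' hw']

theorem norm_one_sub_conj_mul_le {z : ℂ} (hz : ‖z‖ ≤ 1) (w : ℂ) :
    ‖1 - (starRingEnd ℂ) w * z‖ ≤ (1 - ‖z‖ ^ 2) + ‖z - w‖ := by
  have hsplit : 1 - (starRingEnd ℂ) w * z
      = ((1 - ‖z‖ ^ 2 : ℝ) : ℂ) + z * (starRingEnd ℂ) (z - w) := by
    rw [map_sub, mul_sub, mul_conj, normSq_eq_norm_sq]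
    push_cast
    ring
  have hnonneg : 0 ≤ 1 - ‖z‖ ^ 2 := by nlinarith [norm_nonneg z]
  calc ‖1 - (starRingEnd ℂ) w * z‖
      ≤ ‖((1 - ‖z‖ ^ 2 : ℝ) : ℂ)‖ + ‖z‖ * ‖z - w‖ := by
        rw [hsplit, ← norm_conj (z - w), ← norm_mul]; exact norm_add_le _ _
    _ ≤ (1 - ‖z‖ ^ 2) + ‖z - w‖ := by
        rw [norm_real, Real.norm_of_nonneg hnonneg]
        gcongr
        exact mul_le_of_le_one_left (norm_nonneg _) hz

section UnitDisk

variable {z w : ℂ} (hz : ‖z‖ < 1) (hw : ‖w‖ < 1)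
include hz hw

theorem pseudoHypDist_lt_one : pseudoHypDist z w < 1 := by
  have hlt := norm_sub_lt_norm_one_sub_conj_mul hz hw
  rw [pseudoHypDist, norm_div]
  exact (div_lt_one ((norm_nonneg _).trans_lt hlt)).2 hlt

theorem one_sub_pseudoHypDist_mul_norm_sub_le :
    (1 - pseudoHypDist z w) * ‖z - w‖ ≤ pseudoHypDist z w * (1 - ‖z‖ ^ 2) := by
  have hden : 0 < ‖1 - (starRingEnd ℂ) w * z‖ :=
    (norm_nonneg _).trans_lt (norm_sub_lt_norm_one_sub_conj_mul hz hw)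
  have hnorm : ‖z - w‖ = pseudoHypDist z w * ‖1 - (starRingEnd ℂ) w * z‖ := by
    rw [pseudoHypDist, norm_div, div_mul_cancel₀ _ hden.ne']
  have hle := mul_le_mul_of_nonneg_left (norm_one_sub_conj_mul_le hz.le w)
    (norm_nonneg ((z - w) / (1 - (starRingEnd ℂ) w * z)))
  rw [← pseudoHypDist, ← hnorm] at hle
  linarith

theorem norm_sub_le_of_hypDist_le {R : ℝ} (h : hypDist z w ≤ R) :
    ‖z - w‖ ≤ (Real.exp R - 1) * (1 - ‖z‖) := by
  set t := pseudoHypDist z w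
  have ht0 : 0 ≤ t := norm_nonneg _
  have ht1 : t < 1 := pseudoHypDist_lt_one hz hw
  have hexp : (1 + t) / (1 - t) ≤ Real.exp R :=
    (Real.log_le_iff_le_exp (div_pos (by linarith) (by linarith))).1 h
  have h2t : 2 * t ≤ (Real.exp R - 1) * (1 - t) := by
    rw [div_le_iff₀ (by linarith)] at hexp; linarith
  have hmain := one_sub_pseudoHypDist_mul_norm_sub_le hz hw
  have hfactor : 1 - ‖z‖ ^ 2 ≤ 2 * (1 - ‖z‖) := by nlinarith [norm_nonneg z]
  refine le_of_mul_le_mul_left ?_ (sub_pos.2 ht1)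
  calc (1 - t) * ‖z - w‖ ≤ t * (2 * (1 - ‖z‖)) := hmain.trans (by gcongr)
    _ ≤ (1 - t) * ((Real.exp R - 1) * (1 - ‖z‖)) := by nlinarith [hz]

end UnitDisk

theorem IsClosed.mem_of_mem_closure_of_dist_le_mul_sub_norm {V : Type*}
    [SeminormedAddCommGroup V] {S K : Set V} (hK : IsClosed K) {C r : ℝ} (hC : 0 ≤ C)
    (hS : ∀ z ∈ S, ∃ w ∈ K, dist z w ≤ C * (r - ‖z‖)) {ζ : V} (hζ : ζ ∈ closure S)
    (hζr : ‖ζ‖ = r) : ζ ∈ K := by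
  rw [← hK.closure_eq, Metric.mem_closure_iff]
  intro ε hε
  obtain ⟨z, hzS, hζz⟩ := Metric.mem_closure_iff.1 hζ (ε / (1 + C)) (by positivity)
  obtain ⟨w, hwK, hzw⟩ := hS z hzS
  have hr : r - ‖z‖ ≤ dist ζ z := hζr ▸ dist_eq_norm ζ z ▸ norm_sub_norm_le ζ z
  refine ⟨w, hwK, ?_⟩
  calc dist ζ w ≤ dist ζ z + C * dist ζ z :=
        (dist_triangle ζ z w).trans (by gcongr; exact hzw.trans (by gcongr))
    _ = (1 + C) * dist ζ z := by ring
    _ < ε := (lt_div_iff₀' (by positivity)).1 hζz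

theorem closure_hyperbolic_nbhd_compact_general (X : Set ℂ)
    (K : Set ℂ) (hK : IsCompact K) (hKsub : K ⊆ unitDisk ∪ X)
    (R : ℝ) (hR : 0 < R) :
    IsCompact (closure {z ∈ unitDisk | ∃ w ∈ K ∩ unitDisk, hypDist z w ≤ R}) ∧
      closure {z ∈ unitDisk | ∃ w ∈ K ∩ unitDisk, hypDist z w ≤ R} ⊆
        unitDisk ∪ X := by
  set E := {z ∈ unitDisk | ∃ w ∈ K ∩ unitDisk, hypDist z w ≤ R}
  have hclosure : closure E ⊆ Metric.closedBall 0 1 :=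
    closure_minimal (fun z hz ↦ mem_closedBall_zero_iff.2 (le_of_lt hz.1))
      Metric.isClosed_closedBall
  refine ⟨(isCompact_closedBall 0 1).of_isClosed_subset isClosed_closure hclosure,
    fun ζ hζ ↦ ?_⟩
  rcases (mem_closedBall_zero_iff.1 (hclosure hζ)).lt_or_eq with hζ1 | hζ1
  · exact Or.inl hζ1
  refine hKsub (hK.isClosed.mem_of_mem_closure_of_dist_le_mul_sub_norm
    (sub_nonneg.2 (Real.one_le_exp hR.le)) (fun z hz ↦ ?_) hζ hζ1)
  obtain ⟨w, ⟨hwK, hw⟩, hzw⟩ := hz.2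
  exact ⟨w, hwK, dist_eq_norm z w ▸ norm_sub_le_of_hypDist_le hz.1 hw hzw⟩

/-- For compact `K ⊆ 𝔻 ∪ X` with `K ∩ 𝔻 ≠ ∅` and `R > 0`, the closure
of the hyperbolic `R`-neighborhood `E = {z ∈ 𝔻 : ∃ w ∈ K ∩ 𝔻, d_H(z,w) ≤ R}` is a
compact subset of `𝔻 ∪ X`. -/
theorem closure_hyperbolic_nbhd_compact (X : Set ℂ) (hX : X ⊆ unitCircle)
    (K : Set ℂ) (hK : IsCompact K) (hKsub : K ⊆ unitDisk ∪ X)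
    (hne : (K ∩ unitDisk).Nonempty) (R : ℝ) (hR : 0 < R) :
    IsCompact (closure {z ∈ unitDisk | ∃ w ∈ K ∩ unitDisk, hypDist z w ≤ R}) ∧
      closure {z ∈ unitDisk | ∃ w ∈ K ∩ unitDisk, hypDist z w ≤ R} ⊆
        unitDisk ∪ X :=
  closure_hyperbolic_nbhd_compact_general X K hK hKsub R hR
end
end

section
/- Let X = {ξ₁, ξ₂, …} be a countably infinite set of distinct points on the unit circle 𝕊 such that X has no accumulation point belonging to X (i.e., every ξ ∈ X has a neighborhood U in ℂ with U ∩ X = {ξ}), and set X_n = {ξ₁, …, ξ_n}. Then L_♯^X(𝔻) is contained in the closure of ⋃_{n=1}^{∞} L_♯^{X_n}(𝔻) in L^∞(𝔻): for every μ ∈ L_♯^X(𝔻) and every ε > 0 there exist n ∈ ℕ and ν ∈ L_♯^{X_n}(𝔻) with ‖ν‖_∞ ≤ ‖μ‖_∞ and ‖μ − ν‖_∞ < ε. -/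
open MeasureTheory Filter Topology ENNReal

noncomputable section

/-! The compact set `K ⊆ 𝔻 ∪ X` witnessing that `μ` is small near the boundary meets the
isolated set `X ⊆ 𝕊` in finitely many points, hence `K ⊆ 𝔻 ∪ Xₙ` for some `n`, and the
truncation `ν = 1_K μ` vanishes at the boundary relative to `Xₙ`, is dominated by `μ`, and
differs from `μ` only on `𝔻 \ K`, where `|μ| < ε`. -/

open Set

lemma isDiscrete_of_forall_exists_nhds_inter_eq_singleton {X : Type*} [TopologicalSpace X]
    {s : Set X} (h : ∀ x ∈ s, ∃ U ∈ 𝓝 x, U ∩ s = {x}) : IsDiscrete s := by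
  refine isDiscrete_iff_forall_mem_exists_isOpen.2 fun x hx => ?_
  obtain ⟨U, hU, hUs⟩ := h x hx
  obtain ⟨V, hVU, hVo, hxV⟩ := mem_nhds_iff.1 hU
  exact ⟨V, hVo, Subset.antisymm (hUs ▸ inter_subset_inter_left s hVU)
    (singleton_subset_iff.2 ⟨hxV, hx⟩)⟩

lemma IsCompact.finite_inter_of_subset_union {X : Type*} [TopologicalSpace X] {K D S : Set X}
    (hK : IsCompact K) (hS : IsDiscrete S) (hD : Disjoint D (closure S)) (hKDS : K ⊆ D ∪ S) :
    (K ∩ S).Finite := by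
  have hKS : K ∩ closure S ⊆ S := fun z ⟨hzK, hzS⟩ =>
    (hKDS hzK).resolve_left fun hzD => hD.ne_of_mem hzD hzS rfl
  have hKS' : K ∩ S = K ∩ closure S :=
    Subset.antisymm (inter_subset_inter_right _ subset_closure) (subset_inter inter_subset_left hKS)
  exact (hKS' ▸ hK.inter_right isClosed_closure).finite (hS.mono inter_subset_right)

lemma Set.Finite.exists_subset_image_Iio {α : Type*} {f : ℕ → α} {s : Set α} (hs : s.Finite)
    (hsf : s ⊆ range f) : ∃ n, s ⊆ f '' Iio n := by
  have hmono : Monotone fun n => f '' Iio n := fun _ _ hmn => image_mono (Iio_subset_Iio hmn)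
  have hcover : s ⊆ ⋃ n, f '' Iio n := by
    rintro _ hx
    obtain ⟨i, rfl⟩ := hsf hx
    exact mem_iUnion.2 ⟨i + 1, mem_image_of_mem f (Nat.lt_succ_self i)⟩
  simpa using hmono.directed_le.exists_mem_subset_of_finset_subset_biUnion
    (s := hs.toFinset) (by simpa using hcover)

lemma isClosed_unitCircle : IsClosed unitCircle :=
  isClosed_eq continuous_norm continuous_const

lemma essBnd_mono (μ : ℂ → ℂ) {s t : Set ℂ} (hst : s ⊆ t) : essBnd μ s ≤ essBnd μ t :=
  essSup_mono_measure' (Measure.restrict_mono hst le_rfl)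

lemma essBnd_empty (μ : ℂ → ℂ) : essBnd μ ∅ = 0 := by
  simp [essBnd]

lemma essBnd_indicator {t : Set ℂ} (ht : MeasurableSet t) (μ : ℂ → ℂ) (s : Set ℂ) :
    essBnd (t.indicator μ) s = essBnd μ (t ∩ s) := by
  rw [essBnd, essBnd, ← Measure.restrict_restrict ht,
    ← ENNReal.essSup_indicator_eq_essSup_restrict ht]
  congr 1
  ext z
  by_cases hz : z ∈ t <;> simp [hz]

theorem L_sharp_union_dense_general (ξ : ℕ → ℂ)
    (hξ : ∀ i, ξ i ∈ unitCircle)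
    (hisol : ∀ i, ∃ U ∈ nhds (ξ i), U ∩ Set.range ξ = {ξ i})
    (μ : ℂ → ℂ) (hμ : MemLinf μ) (hvan : VanishRel (Set.range ξ) μ) :
    ∀ ε : ℝ, 0 < ε → ∃ (n : ℕ) (ν : ℂ → ℂ), MemLinf ν ∧
      VanishRel (ξ '' Set.Iio n) ν ∧
      essBnd ν unitDisk ≤ essBnd μ unitDisk ∧
      essBnd (fun z => μ z - ν z) unitDisk < ENNReal.ofReal ε := by
  intro ε hε
  obtain ⟨K, hKc, hKsub, hKess⟩ := hvan ε hε
  have hKm : MeasurableSet K := hKc.isClosed.measurableSet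
  have hdisc : IsDiscrete (range ξ) :=
    isDiscrete_of_forall_exists_nhds_inter_eq_singleton (forall_mem_range.2 hisol)
  have hdisj : Disjoint unitDisk (closure (range ξ)) := disjoint_left.2 fun z hzD hzX =>
    hzD.ne (closure_minimal (range_subset_iff.2 hξ) isClosed_unitCircle hzX)
  obtain ⟨n, hn⟩ := (hKc.finite_inter_of_subset_union hdisc hdisj hKsub).exists_subset_image_Iio
    inter_subset_right
  have hν_le : essBnd (K.indicator μ) unitDisk ≤ essBnd μ unitDisk := by
    rw [essBnd_indicator hKm]
    exact essBnd_mono μ inter_subset_right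
  refine ⟨n, K.indicator μ, ⟨hμ.1.indicator hKm, ne_top_of_le_ne_top hμ.2 hν_le⟩, ?_, hν_le, ?_⟩
  · intro δ hδ
    refine ⟨K, hKc, fun z hz => (hKsub hz).imp id fun hzX => hn ⟨hz, hzX⟩, ?_⟩
    rw [essBnd_indicator hKm, inter_sdiff_self, essBnd_empty]
    exact ENNReal.ofReal_pos.2 hδ
  · have hdiff : (fun z => μ z - K.indicator μ z) = Kᶜ.indicator μ :=
      (indicator_compl K μ).symm
    rwa [hdiff, essBnd_indicator hKm.compl, inter_comm, ← sdiff_eq]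

/-- If `X = {ξ₁, ξ₂, …}` is a countably infinite set of distinct points
of `𝕊` with no accumulation point belonging to `X`, and `Xₙ = {ξ₁, …, ξₙ}`, then
`L_♯^X(𝔻)` is contained in the closure of `⋃ₙ L_♯^{Xₙ}(𝔻)`: every `μ ∈ L_♯^X(𝔻)` is
approximated within `ε` by some `ν ∈ L_♯^{Xₙ}(𝔻)` with `‖ν‖_∞ ≤ ‖μ‖_∞`. -/
theorem L_sharp_union_dense (ξ : ℕ → ℂ) (hinj : Function.Injective ξ)
    (hξ : ∀ i, ξ i ∈ unitCircle)
    (hisol : ∀ i, ∃ U ∈ nhds (ξ i), U ∩ Set.range ξ = {ξ i})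
    (μ : ℂ → ℂ) (hμ : MemLinf μ) (hvan : VanishRel (Set.range ξ) μ) :
    ∀ ε : ℝ, 0 < ε → ∃ (n : ℕ) (ν : ℂ → ℂ), MemLinf ν ∧
      VanishRel (ξ '' Set.Iio n) ν ∧
      essBnd ν unitDisk ≤ essBnd μ unitDisk ∧
      essBnd (fun z => μ z - ν z) unitDisk < ENNReal.ofReal ε :=
  L_sharp_union_dense_general ξ hξ hisol μ hμ hvan
end
end
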